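/- arXiv:1611.00202 — 16 statements merged into one kernel-verified Lean document; each statement's English description precedes it below -/
import Mathlib

section
/- The product X = ∏_{n∈ℕ} X_n of countably many spaces of almost countable type is of almost countable type. -/
open Set Topology Pointwise

/-- A compact subset `K` of `X` is of countable character in `X` if there is a
countable family of open sets, each containing `K`, such that every open set
containing `K` contains one of them. -/
def CountableChar {X : Type*} [TopologicalSpace X] (K : Set X) : Prop :=
  ∃ U : ℕ → Set X, (∀ n, IsOpen (U n) ∧ K ⊆ U n) ∧
    ∀ V : Set X, IsOpen V → K ⊆ V → ∃ n, U n ⊆ V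

/-- A space is of almost countable type if it contains a non-empty compact set
of countable character in the space. -/
def AlmostCountableType (X : Type*) [TopologicalSpace X] : Prop :=
  ∃ K : Set X, K.Nonempty ∧ IsCompact K ∧ CountableChar K

/-- A space is of almost subcountable type if it contains a non-empty compact
set that is a Gδ-set in the space. -/
def AlmostSubcountableType (X : Type*) [TopologicalSpace X] : Prop :=
  ∃ K : Set X, K.Nonempty ∧ IsCompact K ∧ IsGδ K

/-- A space is of countable type if every compact subset is contained in a
compact subset of countable character in the space. -/
def CountableType (X : Type*) [TopologicalSpace X] : Prop :=
  ∀ F : Set X, IsCompact F → ∃ K : Set X, F ⊆ K ∧ IsCompact K ∧ CountableChar K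

/-- A map is perfect if it is continuous, closed, and has compact fibers. -/
def PerfectMap {X Y : Type*} [TopologicalSpace X] [TopologicalSpace Y] (f : X → Y) : Prop :=
  Continuous f ∧ IsClosedMap f ∧ ∀ y : Y, IsCompact (f ⁻¹' {y})

/-!
Countable character of `K` says exactly that the neighbourhood filter `𝓝ˢ K` is countably
generated. For compact factors the neighbourhood filter of the box `∏ Kₙ` is the product of the
filters `𝓝ˢ Kₙ` (a filter form of Wallace's theorem, proved with ultrafilters), and a countable
product of countably generated filters is countably generated.
-/

open Filter

theorem countableChar_iff_isCountablyGenerated {X : Type*} [TopologicalSpace X] {K : Set X} :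
    CountableChar K ↔ (𝓝ˢ K).IsCountablyGenerated := by
  constructor
  · rintro ⟨U, hU, hUV⟩
    exact HasBasis.isCountablyGenerated (p := fun _ : ℕ => True) <|
      (hasBasis_nhdsSet K).to_hasBasis'
        (fun W ⟨hWo, hKW⟩ => (hUV W hWo hKW).imp fun _ hn => ⟨trivial, hn⟩)
        (fun n _ => (hU n).1.mem_nhdsSet.2 (hU n).2)
  · intro _
    obtain ⟨U, hU, hbasis⟩ := (hasBasis_nhdsSet K).exists_antitone_subbasis
    exact ⟨U, hU, fun V hVo hKV => hbasis.mem_iff.1 (hVo.mem_nhdsSet.2 hKV)⟩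

theorem IsCompact.ultrafilter_le_nhds_of_le_nhdsSet {X : Type*} [TopologicalSpace X]
    {K : Set X} (hK : IsCompact K) {f : Ultrafilter X} (hf : ↑f ≤ 𝓝ˢ K) :
    ∃ x ∈ K, ↑f ≤ 𝓝 x := by
  by_contra! h
  have hdisj : Disjoint (𝓝ˢ K) f :=
    hK.disjoint_nhdsSet_left.2 fun x hx => (Ultrafilter.disjoint_iff_not_le.2 (h x hx)).symm
  exact f.neBot.ne (hdisj.symm.eq_bot_of_le hf)

theorem nhdsSet_univ_pi {ι : Type*} {X : ι → Type*} [∀ i, TopologicalSpace (X i)]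
    {K : ∀ i, Set (X i)} (hK : ∀ i, IsCompact (K i)) :
    𝓝ˢ (univ.pi K) = Filter.pi fun i => 𝓝ˢ (K i) := by
  refine le_antisymm (le_pi.2 fun i => (continuous_apply i).tendsto_nhdsSet
    fun x hx => hx i (mem_univ i)) (le_iff_ultrafilter.2 fun f hf => ?_)
  choose x hxK hfx using fun i =>
    (hK i).ultrafilter_le_nhds_of_le_nhdsSet (f := f.map (Function.eval i)) (le_pi.1 hf i)
  calc (f : Filter (∀ i, X i)) ≤ 𝓝 x := by rw [nhds_pi]; exact le_pi.2 hfx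
    _ ≤ 𝓝ˢ (univ.pi K) := nhds_le_nhdsSet fun i _ => hxK i

/-- The product of countably many spaces of almost countable type is of
almost countable type. -/
theorem almostCountableType_pi (X : ℕ → Type*) [∀ n, TopologicalSpace (X n)]
    (h : ∀ n, AlmostCountableType (X n)) :
    AlmostCountableType (∀ n, X n) := by
  choose K hKne hKc hKchar using h
  have hgen : ∀ n, (𝓝ˢ (K n)).IsCountablyGenerated := fun n =>
    countableChar_iff_isCountablyGenerated.1 (hKchar n)
  refine ⟨univ.pi K, univ_pi_nonempty_iff.2 hKne, isCompact_univ_pi hKc, ?_⟩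
  rw [countableChar_iff_isCountablyGenerated, nhdsSet_univ_pi hKc]
  infer_instance
end

section
/- If f : X → Y is a perfect mapping from a topological space X onto a space Y of almost countable type, then X is of almost countable type. -/
open Set Topology Pointwise

/-- If `f : X → Y` is a perfect map from `X` onto a space `Y` of almost
countable type, then `X` is of almost countable type. -/
theorem almostCountableType_of_perfectMap {X Y : Type*} [TopologicalSpace X]
    [TopologicalSpace Y] (f : X → Y) (hf : PerfectMap f)
    (hsurj : Function.Surjective f) (hY : AlmostCountableType Y) :
    AlmostCountableType X := by
  obtain ⟨hc, hcl, hfib⟩ := hf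
  obtain ⟨K, ⟨y₀, hy₀⟩, hKc, U, hU, hUchar⟩ := hY
  have hproper : IsProperMap f :=
    isProperMap_iff_isClosedMap_and_compact_fibers.2 ⟨hc, hcl, hfib⟩
  refine ⟨f ⁻¹' K, ?_, hproper.isCompact_preimage hKc, fun n => f ⁻¹' U n, ?_, ?_⟩
  · obtain ⟨x, hx⟩ := hsurj y₀
    exact ⟨x, by simp [hx, hy₀]⟩
  · exact fun n => ⟨(hU n).1.preimage hc, preimage_mono (hU n).2⟩
  · intro W hW hKW
    have hclosed : IsClosed (f '' Wᶜ) := hcl _ hW.isClosed_compl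
    have hKsub : K ⊆ (f '' Wᶜ)ᶜ := by
      intro y hy hmem
      obtain ⟨x, hxW, hfx⟩ := hmem
      exact hxW (hKW (by simp [mem_preimage, hfx, hy]))
    obtain ⟨n, hn⟩ := hUchar _ hclosed.isOpen_compl hKsub
    refine ⟨n, fun x hx => ?_⟩
    by_contra hxW
    exact hn hx ⟨x, hxW, rfl⟩
end

section
/- If f : X → Y is a perfect mapping from a topological space X onto a space Y of almost subcountable type, then X is of almost subcountable type. -/
open Set Topology Pointwise

lemma gdelta_preimage {X Y : Type*} [TopologicalSpace X] [TopologicalSpace Y] {K : Set Y}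
    {f : X → Y} (hK : IsGδ K) (hf : Continuous f) : IsGδ (f ⁻¹' K) := by
  obtain ⟨T, hTo, hTc, rfl⟩ := hK
  rw [Set.sInter_eq_biInter, Set.preimage_iInter₂]
  exact IsGδ.biInter hTc fun t ht => ((hTo t ht).preimage hf).isGδ

/-- If `f : X → Y` is a perfect map from `X` onto a space `Y` of almost
subcountable type, then `X` is of almost subcountable type. -/
theorem almostSubcountableType_of_perfectMap {X Y : Type*} [TopologicalSpace X]
    [TopologicalSpace Y] (f : X → Y) (hf : PerfectMap f)
    (hsurj : Function.Surjective f) (hY : AlmostSubcountableType Y) :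
    AlmostSubcountableType X := by
  obtain ⟨K, hne, hK, hGδ⟩ := hY
  have hproper : IsProperMap f :=
    isProperMap_iff_isClosedMap_and_compact_fibers.2 ⟨hf.1, hf.2.1, hf.2.2⟩
  refine ⟨f ⁻¹' K, ?_, hproper.isCompact_preimage hK, gdelta_preimage hGδ hf.1⟩
  obtain ⟨y, hy⟩ := hne
  obtain ⟨x, rfl⟩ := hsurj y
  exact ⟨x, hy⟩
end

section
/- Let G be a paratopological group. Then G is of almost countable type if and only if G is of countable type. -/
open Set Topology Pointwise

/-- A paratopological group is of almost countable type iff it is of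
countable type. -/
theorem paratopologicalGroup_almostCountableType_iff_countableType
    (G : Type*) [Group G] [TopologicalSpace G] [ContinuousMul G] :
    AlmostCountableType G ↔ CountableType G := by
  constructor
  · rintro ⟨K, ⟨k0, hk0⟩, hKc, U, hU, hbase⟩ F hF
    -- decreasing base
    set U' : ℕ → Set G := fun n => ⋂ k ∈ Finset.range (n + 1), U k with hU'def
    have hU'open : ∀ n, IsOpen (U' n) := fun n =>
      isOpen_biInter_finset fun k _ => (hU k).1
    have hU'sub : ∀ n, K ⊆ U' n := fun n =>
      subset_iInter₂ fun k _ => (hU k).2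
    have hU'anti : ∀ {m n}, m ≤ n → U' n ⊆ U' m := by
      intro m n hmn
      exact biInter_subset_biInter_left (Finset.range_subset_range.2 (by omega))
    have hU'le : ∀ n, U' n ⊆ U n := fun n =>
      biInter_subset_of_mem (Finset.self_mem_range_succ n)
    set S : Set G := F * ({k0⁻¹} : Set G) with hSdef
    have hSc : IsCompact S := hF.mul isCompact_singleton
    refine ⟨S * K, ?_, hSc.mul hKc, fun n => S * U' n, fun n =>
      ⟨(hU'open n).mul_left, mul_subset_mul_left (hU'sub n)⟩, ?_⟩
    · intro f hf
      have : f = f * k0⁻¹ * k0 := by group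
      rw [this]
      exact mul_mem_mul (mul_mem_mul hf rfl) hk0
    · intro V hV hSKV
      -- for each x ∈ S find open nbhd A and index n with A * U' n ⊆ V
      have key : ∀ x ∈ S, ∃ A : Set G, IsOpen A ∧ x ∈ A ∧ ∃ n, A * U' n ⊆ V := by
        intro x hx
        have hsub : ({x} : Set G) ×ˢ K ⊆ (fun p : G × G => p.1 * p.2) ⁻¹' V := by
          rintro ⟨a, b⟩ ⟨ha, hb⟩
          rw [mem_singleton_iff] at ha
          subst ha
          exact hSKV (mul_mem_mul hx hb)
        obtain ⟨A, B, hA, hB, hxA, hKB, hABV⟩ :=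
          generalized_tube_lemma isCompact_singleton hKc
            (hV.preimage continuous_mul) hsub
        obtain ⟨n, hn⟩ := hbase B hB hKB
        refine ⟨A, hA, hxA rfl, n, ?_⟩
        rintro _ ⟨a, ha, b, hb, rfl⟩
        exact hABV (mk_mem_prod ha (hn (hU'le n hb)))
      choose! A hAopen hAx n hn using key
      obtain ⟨t, hts, htfin, hcov⟩ :=
        hSc.elim_finite_subcover_image (fun x hx => hAopen x hx)
          (fun x hx => mem_biUnion hx (hAx x hx))
      classical
      refine ⟨htfin.toFinset.sup n, ?_⟩
      rintro _ ⟨s, hs, u, hu, rfl⟩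
      obtain ⟨x, hx, hsA⟩ := mem_iUnion₂.1 (hcov hs)
      refine hn x (hts hx) (mul_mem_mul hsA (hU'anti ?_ hu))
      exact Finset.le_sup (htfin.mem_toFinset.2 hx)
  · intro h
    obtain ⟨K, hK1, hKc, hKchar⟩ := h {1} isCompact_singleton
    exact ⟨K, ⟨1, hK1 rfl⟩, hKc, hKchar⟩
end

section
/- In a paratopological group G, if K is a compact subset containing the neutral element e such that K is of countable character in G, and L is an arbitrary compact subset of G, then the set LK = {lk : l ∈ L, k ∈ K} is a compact subset of G containing L that is of countable character in G. -/
open Set Topology Pointwise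

/-- In a paratopological group, if `K` is a compact set of countable character
containing the neutral element and `L` is compact, then `L * K` is a compact
set containing `L` that is of countable character in `G`. -/
theorem mul_compact_countableChar {G : Type*} [Group G] [TopologicalSpace G]
    [ContinuousMul G] {K L : Set G} (hK : IsCompact K) (heK : (1 : G) ∈ K)
    (hKc : CountableChar K) (hL : IsCompact L) :
    IsCompact (L * K) ∧ L ⊆ L * K ∧ CountableChar (L * K) := by

  obtain ⟨U, hU, hUc⟩ := hKc
  -- decreasing version of U
  set W : ℕ → Set G := fun n => ⋂ m ∈ Finset.range (n + 1), U m with hWdef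
  have hWopen : ∀ n, IsOpen (W n) := fun n =>
    isOpen_biInter_finset fun m _ => (hU m).1
  have hWK : ∀ n, K ⊆ W n := fun n =>
    subset_iInter₂ fun m _ => (hU m).2
  have hWU : ∀ n, W n ⊆ U n := fun n =>
    biInter_subset_of_mem (Finset.self_mem_range_succ n)
  have hWanti : ∀ {m n : ℕ}, m ≤ n → W n ⊆ W m := by
    intro m n hmn
    exact biInter_subset_biInter_left (Finset.range_subset_range.mpr (by omega))
  refine ⟨hL.mul hK, ?_, ?_⟩
  · intro l hl
    exact ⟨l, hl, 1, heK, mul_one l⟩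
  · refine ⟨fun n => L * W n, fun n => ⟨(hWopen n).mul_left, mul_subset_mul_left (hWK n)⟩, ?_⟩
    intro V hV hLKV
    -- for each l ∈ L find an open A ∋ l and n with A * U n ⊆ V
    have key : ∀ l : G, ∃ (A : Set G) (n : ℕ),
        l ∈ L → IsOpen A ∧ l ∈ A ∧ A * U n ⊆ V := by
      intro l
      by_cases hl : l ∈ L
      · have h1 : ({l} : Set G) ×ˢ K ⊆ (fun p : G × G => p.1 * p.2) ⁻¹' V := by
          rintro ⟨a, b⟩ ⟨ha, hb⟩
          simp only [mem_singleton_iff] at ha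
          exact hLKV (mul_mem_mul (ha ▸ hl) hb)
        obtain ⟨A, B, hAo, hBo, hlA, hKB, hAB⟩ :=
          generalized_tube_lemma isCompact_singleton hK
            (hV.preimage continuous_mul) h1
        obtain ⟨n, hn⟩ := hUc B hBo hKB
        refine ⟨A, n, fun _ => ⟨hAo, hlA rfl, ?_⟩⟩
        rintro x ⟨a, haA, b, hbU, rfl⟩
        exact hAB (mk_mem_prod haA (hn hbU))
      · exact ⟨∅, 0, fun h => absurd h hl⟩
    choose A n hkey using key
    obtain ⟨t, htL, hcover⟩ := hL.elim_nhds_subcover A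
      (fun l hl => ((hkey l hl).1).mem_nhds ((hkey l hl).2.1))
    refine ⟨t.sup n, ?_⟩
    rintro x ⟨l, hl, k, hk, rfl⟩
    obtain ⟨y, hyt, hly⟩ := mem_iUnion₂.1 (hcover hl)
    have hyL : y ∈ L := htL y hyt
    have hkU : k ∈ U (n y) :=
      hWU (n y) (hWanti (Finset.le_sup hyt) hk)
    exact (hkey y hyL).2.2 ⟨l, hly, k, hkU, rfl⟩
end

section
/- Suppose that H is a closed subgroup of a paratopological group G of almost countable type. Then the quotient space G/H of left cosets, endowed with the quotient topology, is of almost countable type. -/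
open Set Topology Pointwise

/-! Continuous open maps carry compact sets of countable character to compact sets of countable
character, and the quotient map `G → G ⧸ H` is open because `π⁻¹(π U) = ⋃ h ∈ H, U h` and right
translations are homeomorphisms of a paratopological group. -/

section ContinuousOpenMap

variable {X Y : Type*} [TopologicalSpace X] [TopologicalSpace Y] {f : X → Y}

theorem CountableChar.image (hf : Continuous f) (hf' : IsOpenMap f) {K : Set X}
    (hK : CountableChar K) : CountableChar (f '' K) := by
  obtain ⟨U, hU, hU_basis⟩ := hK
  refine ⟨fun n => f '' U n, fun n => ⟨hf' _ (hU n).1, image_mono (hU n).2⟩, ?_⟩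
  intro V hV hKV
  obtain ⟨n, hn⟩ := hU_basis (f ⁻¹' V) (hV.preimage hf) (image_subset_iff.mp hKV)
  exact ⟨n, image_subset_iff.mpr hn⟩

theorem AlmostCountableType.of_isOpenMap (hf : Continuous f) (hf' : IsOpenMap f)
    (hX : AlmostCountableType X) : AlmostCountableType Y := by
  obtain ⟨K, hK_ne, hK_compact, hK_char⟩ := hX
  exact ⟨f '' K, hK_ne.image f, hK_compact.image hf, hK_char.image hf hf'⟩

end ContinuousOpenMap

theorem almostCountableType_quotient_general {G : Type*} [Group G] [TopologicalSpace G]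
    [ContinuousMul G] (H : Subgroup G)
    (hG : AlmostCountableType G) :
    AlmostCountableType (G ⧸ H) :=
  hG.of_isOpenMap QuotientGroup.continuous_mk QuotientGroup.isOpenMap_coe

/-- If `H` is a closed subgroup of a paratopological group `G` of almost
countable type, then the left coset space `G ⧸ H` is of almost countable
type. -/
theorem almostCountableType_quotient {G : Type*} [Group G] [TopologicalSpace G]
    [ContinuousMul G] (H : Subgroup G) (hH : IsClosed (H : Set G))
    (hG : AlmostCountableType G) :
    AlmostCountableType (G ⧸ H) :=
  almostCountableType_quotient_general H hG
end

section
/- Let G be a Hausdorff paratopological group of almost countable type, and let O be a neighborhood of the neutral element in G. Then there exists a compact subgroup H of G with H ⊆ O such that H is of countable character in G. -/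
open Set Topology Pointwise

private lemma mul_mem_closure_mul' {G : Type*} [TopologicalSpace G] [Mul G] [ContinuousMul G]
    {A B : Set G} {a b : G} (ha : a ∈ closure A) (hb : b ∈ closure B) :
    a * b ∈ closure (A * B) := by
  rw [mem_closure_iff_nhds] at ha hb ⊢
  intro t ht
  have hc : (fun p : G × G => p.1 * p.2) ⁻¹' t ∈ 𝓝 (a, b) :=
    (continuous_mul.tendsto (a, b)) ht
  rw [mem_nhds_prod_iff] at hc
  obtain ⟨u, hu, v, hv, huv⟩ := hc
  obtain ⟨x, hxu, hxA⟩ := ha u hu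
  obtain ⟨y, hyv, hyB⟩ := hb v hv
  exact ⟨x * y, huv (Set.mk_mem_prod hxu hyv), Set.mul_mem_mul hxA hyB⟩

/-- A nonempty compact submonoid of a Hausdorff group with continuous multiplication
is closed under inverses. -/
private lemma inv_mem_of_compact_submonoid' {G : Type*} [Group G] [TopologicalSpace G]
    [ContinuousMul G] [T2Space G] {H : Set G} (hc : IsCompact H) (hone : (1 : G) ∈ H)
    (hmul : ∀ a ∈ H, ∀ b ∈ H, a * b ∈ H) {x : G} (hx : x ∈ H) : x⁻¹ ∈ H := by
  have hHcl : IsClosed H := hc.isClosed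
  have hpow : ∀ n : ℕ, x ^ (n + 1) ∈ H := by
    intro n
    induction n with
    | zero => simpa using hx
    | succ k ih => rw [pow_succ]; exact hmul _ ih _ hx
  set R : Set G := Set.range (fun n : ℕ => x ^ (n + 1)) with hR
  have hRH : R ⊆ H := by rintro _ ⟨n, rfl⟩; exact hpow n
  have hSH : closure R ⊆ H := closure_minimal hRH hHcl
  have hScomp : IsCompact (closure R) := hc.of_isClosed_subset isClosed_closure hSH
  have hRR : R * R ⊆ R := by
    rintro _ ⟨_, ⟨i, rfl⟩, _, ⟨j, rfl⟩, rfl⟩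
    refine ⟨i + j + 1, ?_⟩
    show x ^ (i + j + 1 + 1) = x ^ (i + 1) * x ^ (j + 1)
    rw [← pow_add]; congr 1; omega
  have hSmul : ∀ a ∈ closure R, ∀ b ∈ closure R, a * b ∈ closure R := fun a ha b hb =>
    closure_mono hRR (mul_mem_closure_mul' ha hb)
  have hSne : (closure R).Nonempty := ⟨x, subset_closure ⟨0, pow_one x⟩⟩
  obtain ⟨m, hmS, hm⟩ := exists_idempotent_in_compact_subsemigroup
    (fun r : G => continuous_mul_right r) (closure R) hSne hScomp hSmul
  have hm1 : m = 1 := by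
    have h2 : m * m = m * 1 := by rw [mul_one]; exact hm
    exact mul_left_cancel h2
  have h1S : (1 : G) ∈ closure R := hm1 ▸ hmS
  have himg : (fun g => x⁻¹ * g) '' closure R ⊆ closure ((fun g => x⁻¹ * g) '' R) :=
    image_closure_subset_closure_image (continuous_mul_left x⁻¹)
  have himgH : (fun g => x⁻¹ * g) '' R ⊆ H := by
    rintro _ ⟨_, ⟨n, rfl⟩, rfl⟩
    show x⁻¹ * x ^ (n + 1) ∈ H
    have hxx : x⁻¹ * x ^ (n + 1) = x ^ n := by
      rw [pow_succ']; exact inv_mul_cancel_left x (x ^ n)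
    rw [hxx]
    cases n with
    | zero => simpa using hone
    | succ k => exact hpow k
  have hfin : x⁻¹ ∈ closure ((fun g => x⁻¹ * g) '' R) := by
    have := himg (Set.mem_image_of_mem _ h1S)
    simpa using this
  exact (closure_minimal himgH hHcl) hfin

/-- An ultrafilter containing every member of a neighborhood base of a compact set
converges to a point of the compact set. -/
private lemma ultrafilter_le_nhds_of_base' {G : Type*} [TopologicalSpace G] {K : Set G}
    (hK : IsCompact K) {U : ℕ → Set G}
    (hbase : ∀ V : Set G, IsOpen V → K ⊆ V → ∃ n, U n ⊆ V)
    (g : Ultrafilter G) (hg : ∀ n, U n ∈ g) : ∃ a ∈ K, ↑g ≤ 𝓝 a := by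
  by_contra hcon
  push_neg at hcon
  have hsep : ∀ a ∈ K, ∃ s : Set G, a ∈ s ∧ IsOpen s ∧ s ∉ g := by
    intro a ha
    have := hcon a ha
    rw [le_nhds_iff] at this
    push_neg at this
    obtain ⟨s, has, hso, hsg⟩ := this
    exact ⟨s, has, hso, hsg⟩
  choose! O hO1 hO2 hO3 using hsep
  obtain ⟨t, htK, htcov⟩ := hK.elim_nhds_subcover O (fun a ha => (hO2 a ha).mem_nhds (hO1 a ha))
  set A : Set G := ⋃ a ∈ t, O a with hA
  have hAo : IsOpen A := isOpen_biUnion (fun a ha => hO2 a (htK a ha))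
  obtain ⟨n, hn⟩ := hbase A hAo htcov
  have hAg : A ∈ g := Filter.mem_of_superset (hg n) hn
  have hAcg : Aᶜ ∈ g := by
    have hc : ∀ a ∈ (t : Set G), (O a)ᶜ ∈ g := fun a ha =>
      (Ultrafilter.compl_mem_iff_notMem).2 (hO3 a (htK a ha))
    have hint : (⋂ a ∈ (t : Set G), (O a)ᶜ) ∈ g :=
      (Filter.biInter_mem t.finite_toSet).2 hc
    have hAc : Aᶜ = ⋂ a ∈ (t : Set G), (O a)ᶜ := by
      rw [hA]; simp [Set.compl_iUnion]
    rwa [hAc]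
  have hemp : (∅ : Set G) ∈ g := by
    have := g.toFilter.inter_mem hAg hAcg
    rwa [Set.inter_compl_self] at this
  exact Filter.empty_notMem (↑g : Filter G) hemp

theorem exists_compact_subgroup_countableChar' {G : Type*} [Group G]
    [TopologicalSpace G] [ContinuousMul G] [T2Space G]
    (hG : ∃ K : Set G, K.Nonempty ∧ IsCompact K ∧
      ∃ U : ℕ → Set G, (∀ n, IsOpen (U n) ∧ K ⊆ U n) ∧
        ∀ V : Set G, IsOpen V → K ⊆ V → ∃ n, U n ⊆ V)
    {O : Set G} (hO : O ∈ 𝓝 (1 : G)) :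
    ∃ H : Subgroup G, IsCompact (H : Set G) ∧ (H : Set G) ⊆ O ∧
      (∃ U : ℕ → Set G, (∀ n, IsOpen (U n) ∧ (H : Set G) ⊆ U n) ∧
        ∀ V : Set G, IsOpen V → (H : Set G) ⊆ V → ∃ n, U n ⊆ V) := by
  obtain ⟨K₀, ⟨k, hk⟩, hK₀c, U₀, hU₀, hU₀base⟩ := hG
  -- a decreasing version of the base
  set D : ℕ → Set G := fun n => Nat.rec (U₀ 0) (fun m ih => ih ∩ U₀ (m + 1)) n with hD
  have hDsucc : ∀ n, D (n + 1) = D n ∩ U₀ (n + 1) := fun n => rfl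
  have hDo : ∀ n, IsOpen (D n) := by
    intro n
    induction n with
    | zero => exact (hU₀ 0).1
    | succ m ih => rw [hDsucc]; exact ih.inter (hU₀ (m + 1)).1
  have hKD : ∀ n, K₀ ⊆ D n := by
    intro n
    induction n with
    | zero => exact (hU₀ 0).2
    | succ m ih => rw [hDsucc]; exact subset_inter ih (hU₀ (m + 1)).2
  have hDdec : ∀ n, D (n + 1) ⊆ D n := fun n => by rw [hDsucc]; exact inter_subset_left
  have hDanti : Antitone D := antitone_nat_of_succ_le hDdec
  have hDU : ∀ n, D n ⊆ U₀ n := by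
    intro n
    cases n with
    | zero => exact le_refl _
    | succ m => rw [hDsucc]; exact inter_subset_right
  -- translate so that 1 ∈ K'
  set K' : Set G := (fun g => k⁻¹ * g) '' K₀ with hK'
  have hK'c : IsCompact K' := hK₀c.image (continuous_mul_left k⁻¹)
  have h1K' : (1 : G) ∈ K' := ⟨k, hk, inv_mul_cancel k⟩
  set U' : ℕ → Set G := fun n => (fun g => k * g) ⁻¹' (D n) with hU'
  have hU'o : ∀ n, IsOpen (U' n) := fun n => (hDo n).preimage (continuous_mul_left k)
  have hK'U' : ∀ n, K' ⊆ U' n := by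
    rintro n _ ⟨x, hx, rfl⟩
    show k * (k⁻¹ * x) ∈ D n
    rw [mul_inv_cancel_left]
    exact hKD n hx
  have hU'anti : Antitone U' := fun m n h => Set.preimage_mono (hDanti h)
  have hbase' : ∀ V : Set G, IsOpen V → K' ⊆ V → ∃ n, U' n ⊆ V := by
    intro V hVo hKV
    have hV'o : IsOpen ((fun g => k⁻¹ * g) ⁻¹' V) := hVo.preimage (continuous_mul_left k⁻¹)
    have hKV' : K₀ ⊆ (fun g => k⁻¹ * g) ⁻¹' V := fun x hx => hKV ⟨x, hx, rfl⟩
    obtain ⟨n, hn⟩ := hU₀base _ hV'o hKV'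
    refine ⟨n, fun g hg => ?_⟩
    have h1 : k * g ∈ U₀ n := hDU n hg
    have h2 : k⁻¹ * (k * g) ∈ V := hn h1
    rwa [inv_mul_cancel_left] at h2
  have hK'eq : (⋂ n, U' n) = K' := by
    refine Subset.antisymm ?_ (fun x hx => mem_iInter.2 fun n => hK'U' n hx)
    intro x hx
    by_contra hxK
    obtain ⟨A, B, hAo, hBo, hKA, hxB, hAB⟩ :=
      SeparatedNhds.of_isCompact_isCompact hK'c isCompact_singleton
        (disjoint_singleton_right.2 hxK)
    obtain ⟨n, hn⟩ := hbase' A hAo hKA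
    exact Set.disjoint_left.1 hAB (hn (mem_iInter.1 hx n)) (hxB (mem_singleton x))
  -- the recursive construction of the W n
  have step : ∀ (n : ℕ) (W : {S : Set G // IsOpen S ∧ (1 : G) ∈ S}),
      ∃ W' : {S : Set G // IsOpen S ∧ (1 : G) ∈ S},
        W'.1 * W'.1 ⊆ W.1 ∧ K' * W'.1 ⊆ U' n ∧ W'.1 * K' ⊆ U' n ∧
          closure W'.1 ∩ K' ⊆ W.1 := by
    rintro n ⟨W, hWo, hW1⟩
    obtain ⟨V₁, hV₁o, hV₁1, hV₁⟩ := exists_open_nhds_one_mul_subset (hWo.mem_nhds hW1)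
    obtain ⟨V₂, hV₂n, hV₂⟩ := compact_open_separated_mul_right hK'c (hU'o n) (hK'U' n)
    obtain ⟨V₃, hV₃n, hV₃⟩ := compact_open_separated_mul_left hK'c (hU'o n) (hK'U' n)
    obtain ⟨A, B, hAo, hBo, h1A, hCB, hAB⟩ :=
      SeparatedNhds.of_isCompact_isCompact isCompact_singleton (hK'c.diff hWo)
        (by rw [Set.disjoint_singleton_left]; exact fun h => h.2 hW1)
    set W' : Set G := V₁ ∩ interior V₂ ∩ interior V₃ ∩ A with hW'
    have hsub1 : W' ⊆ V₁ := fun x hx => hx.1.1.1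
    have hsub2 : W' ⊆ V₂ := fun x hx => interior_subset hx.1.1.2
    have hsub3 : W' ⊆ V₃ := fun x hx => interior_subset hx.1.2
    have hsubA : W' ⊆ A := fun x hx => hx.2
    refine ⟨⟨W', ((hV₁o.inter isOpen_interior).inter isOpen_interior).inter hAo,
      ⟨⟨⟨hV₁1, mem_interior_iff_mem_nhds.2 hV₂n⟩, mem_interior_iff_mem_nhds.2 hV₃n⟩,
        h1A (mem_singleton 1)⟩⟩, ?_, ?_, ?_, ?_⟩
    · exact (Set.mul_subset_mul hsub1 hsub1).trans hV₁
    · exact (Set.mul_subset_mul_left hsub2).trans hV₂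
    · exact (Set.mul_subset_mul_right hsub3).trans hV₃
    · rintro y ⟨hyc, hyK⟩
      by_contra hyW
      have hyB : y ∈ B := hCB ⟨hyK, hyW⟩
      rw [mem_closure_iff] at hyc
      obtain ⟨z, hzB, hzW'⟩ := hyc B hBo hyB
      exact Set.disjoint_left.1 hAB (hsubA hzW') hzB
  choose F hF1 hF2 hF3 hF4 using step
  have h1O : (1 : G) ∈ interior O := mem_interior_iff_mem_nhds.2 hO
  let W0 : {S : Set G // IsOpen S ∧ (1 : G) ∈ S} :=
    ⟨interior O ∩ U' 0, isOpen_interior.inter (hU'o 0), ⟨h1O, hK'U' 0 h1K'⟩⟩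
  let Wseq : ℕ → {S : Set G // IsOpen S ∧ (1 : G) ∈ S} :=
    fun n => Nat.rec W0 (fun m ih => F (m + 1) ih) n
  set Wn : ℕ → Set G := fun n => (Wseq n).1 with hWnd
  have hWo : ∀ n, IsOpen (Wn n) := fun n => (Wseq n).2.1
  have hW1 : ∀ n, (1 : G) ∈ Wn n := fun n => (Wseq n).2.2
  have hWmul : ∀ n, Wn (n + 1) * Wn (n + 1) ⊆ Wn n := fun n => hF1 (n + 1) (Wseq n)
  have hWwallR : ∀ n, K' * Wn (n + 1) ⊆ U' (n + 1) := fun n => hF2 (n + 1) (Wseq n)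
  have hWwallL : ∀ n, Wn (n + 1) * K' ⊆ U' (n + 1) := fun n => hF3 (n + 1) (Wseq n)
  have hWcl : ∀ n, closure (Wn (n + 1)) ∩ K' ⊆ Wn n := fun n => hF4 (n + 1) (Wseq n)
  have hWdec : ∀ n, Wn (n + 1) ⊆ Wn n := by
    intro n x hx
    have h2 := hWmul n (Set.mul_mem_mul hx (hW1 (n + 1)))
    rwa [mul_one] at h2
  have hWanti : Antitone Wn := antitone_nat_of_succ_le hWdec
  have hW0O : Wn 0 ⊆ O := fun x hx => interior_subset hx.1
  -- the subgroup
  set H : Set G := K' ∩ ⋂ n, closure (Wn n) with hH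
  have hHsubW : ∀ n, H ⊆ Wn n := fun n x hx =>
    hWcl n ⟨mem_iInter.1 hx.2 (n + 1), hx.1⟩
  have hHc : IsCompact H := hK'c.inter_right (isClosed_iInter fun n => isClosed_closure)
  have h1H : (1 : G) ∈ H := ⟨h1K', mem_iInter.2 fun n => subset_closure (hW1 n)⟩
  have hHmul : ∀ a ∈ H, ∀ b ∈ H, a * b ∈ H := by
    intro a ha b hb
    refine ⟨?_, mem_iInter.2 fun n => ?_⟩
    · rw [← hK'eq]
      refine mem_iInter.2 fun m => ?_
      have h1 : a * b ∈ K' * Wn (m + 1) := Set.mul_mem_mul ha.1 (hHsubW (m + 1) hb)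
      exact hU'anti (Nat.le_succ m) (hWwallR m h1)
    · have h1 := mul_mem_closure_mul' (mem_iInter.1 ha.2 (n + 1)) (mem_iInter.1 hb.2 (n + 1))
      exact closure_mono (hWmul n) h1
  have hHinv : ∀ x ∈ H, x⁻¹ ∈ H := fun x hx => inv_mem_of_compact_submonoid' hHc h1H hHmul hx
  have hHO : H ⊆ O := fun x hx => hW0O (hHsubW 0 hx)
  refine ⟨{ carrier := H, mul_mem' := fun {a b} ha hb => hHmul a ha b hb,
            one_mem' := h1H, inv_mem' := fun {x} hx => hHinv x hx }, hHc, hHO, ?_⟩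
  -- countable character
  refine ⟨fun n => H * Wn (n + 1), fun n => ⟨IsOpen.mul_left (hWo (n + 1)), fun x hx => ?_⟩, ?_⟩
  · have h2 := Set.mul_mem_mul hx (hW1 (n + 1))
    rwa [mul_one] at h2
  intro V hV hHV
  by_contra hcon
  push_neg at hcon
  have hex : ∀ n : ℕ, ∃ x, x ∈ H * Wn (n + 1) ∧ x ∉ V := by
    intro n
    obtain ⟨x, hx1, hx2⟩ := Set.not_subset.1 (hcon n)
    exact ⟨x, hx1, hx2⟩
  choose xs hxsB hxsV using hex
  have hxs' : ∀ n, ∃ h ∈ H, ∃ w ∈ Wn (n + 1), h * w = xs n := fun n => Set.mem_mul.1 (hxsB n)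
  choose hs hhs ws hws heq using hxs'
  let u : Ultrafilter ℕ := Ultrafilter.of Filter.atTop
  have hu : ↑u ≤ (Filter.atTop : Filter ℕ) := Ultrafilter.of_le _
  have hUmem : ∀ m, U' m ∈ u.map xs := by
    intro m
    rw [Ultrafilter.mem_map]
    have htail : {n : ℕ | m ≤ n} ∈ u := hu (Filter.mem_atTop m)
    refine Filter.mem_of_superset htail ?_
    intro n hn
    have h1 : xs n ∈ K' * Wn (n + 1) := by
      rw [← heq n]; exact Set.mul_mem_mul (hhs n).1 (hws n)
    exact hU'anti (le_trans hn (Nat.le_succ n)) (hWwallR n h1)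
  obtain ⟨xstar, hxstarK, hxlim⟩ := ultrafilter_le_nhds_of_base' hK'c hbase' (u.map xs) hUmem
  have t_x : Filter.Tendsto xs ↑u (𝓝 xstar) := by
    show Filter.map xs ↑u ≤ 𝓝 xstar
    rw [← Ultrafilter.coe_map]; exact hxlim
  obtain ⟨hstar, hhstarH, hlim1⟩ := hHc.ultrafilter_le_nhds (u.map hs) (by
    simp only [Filter.le_principal_iff, Ultrafilter.coe_map, Filter.mem_map]
    exact Filter.univ_mem' fun n => hhs n)
  have t_h : Filter.Tendsto hs ↑u (𝓝 hstar) := by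
    show Filter.map hs ↑u ≤ 𝓝 hstar
    rw [← Ultrafilter.coe_map]; exact hlim1
  obtain ⟨p, hpH, hlim2⟩ := hHc.ultrafilter_le_nhds (u.map fun n => (hs n)⁻¹) (by
    simp only [Filter.le_principal_iff, Ultrafilter.coe_map, Filter.mem_map]
    exact Filter.univ_mem' fun n => hHinv (hs n) (hhs n))
  have t_p : Filter.Tendsto (fun n => (hs n)⁻¹) ↑u (𝓝 p) := by
    show Filter.map (fun n => (hs n)⁻¹) ↑u ≤ 𝓝 p
    rw [← Ultrafilter.coe_map]; exact hlim2
  have hp1 : hstar * p = 1 := by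
    have h1 : Filter.Tendsto (fun n => hs n * (hs n)⁻¹) ↑u (𝓝 (hstar * p)) := t_h.mul t_p
    have h2 : (fun n => hs n * (hs n)⁻¹) = fun _ : ℕ => (1 : G) :=
      funext fun n => mul_inv_cancel (hs n)
    rw [h2] at h1
    exact tendsto_nhds_unique h1 tendsto_const_nhds
  have t_w : Filter.Tendsto ws ↑u (𝓝 (p * xstar)) := by
    have h2 : ws = fun n => (hs n)⁻¹ * xs n :=
      funext fun n => by rw [← heq n, inv_mul_cancel_left]
    rw [h2]; exact t_p.mul t_x
  have hyW : ∀ m, p * xstar ∈ closure (Wn m) := by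
    intro m
    refine mem_closure_of_tendsto t_w ?_
    have htail : {n : ℕ | m ≤ n} ∈ ↑u := hu (Filter.mem_atTop m)
    filter_upwards [htail] with n hn
    exact hWanti (le_trans hn (Nat.le_succ n)) (hws n)
  have hyK : p * xstar ∈ K' := by
    rw [← hK'eq]
    refine mem_iInter.2 fun m => ?_
    have h1 : p * xstar ∈ Wn (m + 1) * K' := Set.mul_mem_mul (hHsubW (m + 1) hpH) hxstarK
    exact hU'anti (Nat.le_succ m) (hWwallL m h1)
  have hyH : p * xstar ∈ H := ⟨hyK, mem_iInter.2 hyW⟩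
  have hxstarH : xstar ∈ H := by
    have h1 : xstar = hstar * (p * xstar) := by rw [← mul_assoc, hp1, one_mul]
    rw [h1]; exact hHmul _ hhstarH _ hyH
  have hVn : V ∈ Filter.map xs ↑u := t_x (hV.mem_nhds (hHV hxstarH))
  rw [Filter.mem_map] at hVn
  obtain ⟨n, hn⟩ := Filter.nonempty_of_mem hVn
  exact hxsV n hn

/-- In a Hausdorff paratopological group of almost countable type, every
neighborhood of the neutral element contains a compact subgroup of countable
character in `G`. -/
theorem exists_compact_subgroup_countableChar {G : Type*} [Group G]
    [TopologicalSpace G] [ContinuousMul G] [T2Space G]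
    (hG : AlmostCountableType G) {O : Set G} (hO : O ∈ 𝓝 (1 : G)) :
    ∃ H : Subgroup G, IsCompact (H : Set G) ∧ (H : Set G) ⊆ O ∧
      CountableChar (H : Set G) := by
  exact exists_compact_subgroup_countableChar' hG hO
end

section
/- Let G be a Hausdorff paratopological group of almost subcountable type, and let O be a neighborhood of the neutral element in G. Then there exists a compact subgroup H of G with H ⊆ O such that H is a G_δ-set in G (i.e. H is of countable pseudocharacter in G). -/
open Set Topology Pointwise

section ParaAux
set_option linter.unusedSectionVars false

variable {G : Type*} [Group G] [TopologicalSpace G] [ContinuousMul G] [T2Space G]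

/-- Tube-lemma openness of `{g | g • K ⊆ W}`. -/
lemma isOpen_mulTube {K W : Set G} (hK : IsCompact K) (hW : IsOpen W) :
    IsOpen {g : G | ∀ k ∈ K, g * k ∈ W} := by
  rw [isOpen_iff_forall_mem_open]
  intro g hg
  have hsub : ({g} : Set G) ×ˢ K ⊆ (fun p : G × G => p.1 * p.2) ⁻¹' W := by
    rintro ⟨a, b⟩ ⟨ha, hb⟩
    rcases ha with rfl
    exact hg b hb
  obtain ⟨u, v, hu, hv, hgu, hKv, huv⟩ :=
    generalized_tube_lemma isCompact_singleton hK (hW.preimage continuous_mul) hsub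
  exact ⟨u, fun x hx k hk => huv (Set.mk_mem_prod hx (hKv hk)), hu, hgu rfl⟩

/-- A nonempty compact subsemigroup of a Hausdorff group with continuous
multiplication is a subgroup. -/
lemma compact_subsemigroup_subgroup {T : Set G} (hT : IsCompact T) (hne : T.Nonempty)
    (hTmul : ∀ x ∈ T, ∀ y ∈ T, x * y ∈ T) :
    (1 : G) ∈ T ∧ ∀ s ∈ T, s⁻¹ ∈ T := by
  have idem : ∀ S : Set G, S.Nonempty → IsCompact S → (∀ x ∈ S, ∀ y ∈ S, x * y ∈ S) →
      (1 : G) ∈ S := by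
    intro S hSne hSc hSmul
    obtain ⟨m, hm, hmm⟩ := exists_idempotent_in_compact_subsemigroup
      (fun r : G => continuous_mul_right r) S hSne hSc hSmul
    have : m = 1 := by
      have := mul_left_cancel (a := m) (b := m) (c := 1) (by simpa using hmm)
      exact this
    rwa [this] at hm
  have h1 : (1 : G) ∈ T := idem T hne hT hTmul
  refine ⟨h1, fun s hs => ?_⟩
  have hpow : ∀ n : ℕ, s ^ n ∈ T := by
    intro n
    induction n with
    | zero => simpa using h1
    | succ k ih => rw [pow_succ]; exact hTmul _ ih _ hs
  set A : Set G := Set.range (fun n : ℕ => s ^ (n + 1)) with hA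
  have hAsub : A ⊆ T := by rintro _ ⟨n, rfl⟩; exact hpow _
  have hclA : closure A ⊆ T := hT.isClosed.closure_subset_iff.mpr hAsub
  have hcA : IsCompact (closure A) := hT.of_isClosed_subset isClosed_closure hclA
  have hAne : (closure A).Nonempty := ⟨s, subset_closure ⟨0, by simp⟩⟩
  have hAmul : ∀ x ∈ closure A, ∀ y ∈ closure A, x * y ∈ closure A := by
    intro x hx y hy
    refine map_mem_closure₂ continuous_mul hx hy ?_
    rintro _ ⟨a, rfl⟩ _ ⟨b, rfl⟩
    exact ⟨a + b + 1, by rw [← pow_add]; ring_nf⟩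
  have h1A : (1 : G) ∈ closure A := idem _ hAne hcA hAmul
  -- s⁻¹ = s⁻¹ * 1 ∈ s⁻¹ • closure A ⊆ closure (s⁻¹ • A) ⊆ T
  have himg : (fun g => s⁻¹ * g) '' closure A ⊆ closure ((fun g => s⁻¹ * g) '' A) :=
    image_closure_subset_closure_image (continuous_mul_left _)
  have himgT : (fun g => s⁻¹ * g) '' A ⊆ T := by
    rintro _ ⟨_, ⟨n, rfl⟩, rfl⟩
    have he : s⁻¹ * s ^ (n + 1) = s ^ n := by
      rw [pow_succ']; group
    show s⁻¹ * s ^ (n + 1) ∈ T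
    rw [he]; exact hpow n
  have : s⁻¹ ∈ closure ((fun g => s⁻¹ * g) '' A) := by
    have : s⁻¹ * 1 ∈ (fun g => s⁻¹ * g) '' closure A := ⟨1, h1A, rfl⟩
    simpa using himg this
  exact hT.isClosed.closure_subset_iff.mpr himgT this

lemma isClosed_invPart {T C : Set G} (hT : IsCompact T)
    (hTinv : ∀ x ∈ T, x⁻¹ ∈ T) (hC : IsClosed C) :
    IsClosed {x | x ∈ T ∧ x⁻¹ ∈ C} := by
  set E : Set (G × G) := (T ×ˢ (T ∩ C)) ∩ ((fun p : G × G => p.1 * p.2) ⁻¹' {1}) with hE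
  have hEc : IsCompact E :=
    (hT.prod (hT.inter_right hC)).inter_right
      (isClosed_singleton.preimage continuous_mul)
  have heq : {x | x ∈ T ∧ x⁻¹ ∈ C} = Prod.fst '' E := by
    ext x
    constructor
    · rintro ⟨hxT, hxC⟩
      exact ⟨(x, x⁻¹), ⟨⟨hxT, hTinv x hxT, hxC⟩, by simp⟩, rfl⟩
    · rintro ⟨⟨a, b⟩, ⟨⟨haT, _, hbC⟩, hab⟩, rfl⟩
      have : b = a⁻¹ := eq_inv_of_mul_eq_one_right (by simpa using hab)
      exact ⟨haT, by rwa [← this]⟩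
  rw [heq]
  exact (hEc.image continuous_fst).isClosed

/-- The shrinking step inside the compact subgroup `T`. -/
lemma step_lemma {T : Set G} (hT : IsCompact T)
    (hTinv : ∀ x ∈ T, x⁻¹ ∈ T)
    {S : Set G} (hS : IsOpen S) (h1S : (1 : G) ∈ S) :
    ∃ V : Set G, IsOpen V ∧ (1 : G) ∈ V ∧ V ⊆ S ∧
      (∀ x ∈ V, ∀ y ∈ V, x * y ∈ S) ∧ (∀ x ∈ V ∩ T, x⁻¹ ∈ V) := by
  obtain ⟨u, v, hu, hv, h1u, h1v, huv⟩ :=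
    isOpen_prod_iff.mp (hS.preimage continuous_mul) 1 1 (by simpa using h1S)
  set W : Set G := u ∩ v with hW
  have hWo : IsOpen W := hu.inter hv
  have h1W : (1 : G) ∈ W := ⟨h1u, h1v⟩
  have hWW : ∀ x ∈ W, ∀ y ∈ W, x * y ∈ S := fun x hx y hy =>
    huv (Set.mk_mem_prod hx.1 hy.2)
  set C : Set G := {x | x ∈ T ∧ x⁻¹ ∈ (W ∩ S)ᶜ} with hCdef
  have hCc : IsClosed C := isClosed_invPart hT hTinv (hWo.inter hS).isClosed_compl
  refine ⟨(W ∩ S) ∩ Cᶜ, ((hWo.inter hS).inter hCc.isOpen_compl), ⟨⟨h1W, h1S⟩, ?_⟩,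
    fun x hx => hx.1.2, fun x hx y hy => hWW x hx.1.1 y hy.1.1, ?_⟩
  · intro h
    exact h.2 (by simpa using And.intro h1W h1S)
  · rintro x ⟨⟨hxWS, hxC⟩, hxT⟩
    have hxinv : x⁻¹ ∈ W ∩ S := by
      by_contra h
      exact hxC ⟨hxT, h⟩
    refine ⟨hxinv, fun h => h.2 ?_⟩
    simpa using hxWS

lemma step_lemma_forall {T : Set G} (hT : IsCompact T)
    (hTinv : ∀ x ∈ T, x⁻¹ ∈ T) :
    ∀ S : Set G, IsOpen S → (1 : G) ∈ S →
    ∃ V : Set G, IsOpen V ∧ (1 : G) ∈ V ∧ V ⊆ S ∧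
      (∀ x ∈ V, ∀ y ∈ V, x * y ∈ S) ∧ (∀ x ∈ V ∩ T, x⁻¹ ∈ V) :=
  fun S hS h1S => step_lemma hT hTinv hS h1S

lemma exists_subgroup_in_nhds {T : Set G} (hT : IsCompact T) (h1T : (1 : G) ∈ T)
    (hTmul : ∀ x ∈ T, ∀ y ∈ T, x * y ∈ T) (hTinv : ∀ x ∈ T, x⁻¹ ∈ T)
    (hTGδ : IsGδ T) {O : Set G} (hO : O ∈ 𝓝 (1 : G)) :
    ∃ H : Subgroup G, IsCompact (H : Set G) ∧ (H : Set G) ⊆ O ∧ IsGδ (H : Set G) := by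
  choose! V hVo hV1 hVsub hVmul hVinv using step_lemma_forall hT hTinv
  set U : ℕ → Set G := fun n => Nat.rec (interior O) (fun _ p => V p) n with hU
  have hUsucc : ∀ n, U (n + 1) = V (U n) := fun n => rfl
  have hbase : ∀ n, IsOpen (U n) ∧ (1 : G) ∈ U n := by
    intro n
    induction n with
    | zero => exact ⟨isOpen_interior, mem_interior_iff_mem_nhds.mpr hO⟩
    | succ k ih =>
      rw [hUsucc]
      exact ⟨hVo _ ih.1 ih.2, hV1 _ ih.1 ih.2⟩
  have hUo : ∀ n, IsOpen (U n) := fun n => (hbase n).1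
  have hU1 : ∀ n, (1 : G) ∈ U n := fun n => (hbase n).2
  have hUsub : ∀ n, U (n + 1) ⊆ U n := fun n => by
    rw [hUsucc]; exact hVsub _ (hUo n) (hU1 n)
  have hUmul : ∀ n, ∀ x ∈ U (n + 1), ∀ y ∈ U (n + 1), x * y ∈ U n := fun n => by
    rw [hUsucc]; exact hVmul _ (hUo n) (hU1 n)
  have hUinv : ∀ n, ∀ x ∈ U (n + 1) ∩ T, x⁻¹ ∈ U (n + 1) := fun n => by
    rw [hUsucc]; exact hVinv _ (hUo n) (hU1 n)
  set H : Set G := T ∩ ⋂ n, U n with hH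
  have hHmul : ∀ x ∈ H, ∀ y ∈ H, x * y ∈ H := by
    rintro x ⟨hxT, hxU⟩ y ⟨hyT, hyU⟩
    rw [mem_iInter] at hxU hyU
    refine ⟨hTmul x hxT y hyT, mem_iInter.mpr fun n => ?_⟩
    exact hUmul n x (hxU (n + 1)) y (hyU (n + 1))
  have h1H : (1 : G) ∈ H := ⟨h1T, mem_iInter.mpr hU1⟩
  have hHinv : ∀ x ∈ H, x⁻¹ ∈ H := by
    rintro x ⟨hxT, hxU⟩
    rw [mem_iInter] at hxU
    have key : ∀ n, x⁻¹ ∈ U (n + 1) := fun n => hUinv n x ⟨hxU (n + 1), hxT⟩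
    refine ⟨hTinv x hxT, mem_iInter.mpr fun n => ?_⟩
    cases n with
    | zero => exact hUsub 0 (key 0)
    | succ k => exact key k
  -- closedness
  have hHc : IsCompact H := by
    have heq : H = T ∩ ⋂ n, closure (U (n + 1) ∩ T) := by
      apply Subset.antisymm
      · rintro x ⟨hxT, hxU⟩
        rw [mem_iInter] at hxU
        exact ⟨hxT, mem_iInter.mpr fun n => subset_closure ⟨hxU (n + 1), hxT⟩⟩
      · rintro x ⟨hxT, hxcl⟩
        rw [mem_iInter] at hxcl
        refine ⟨hxT, mem_iInter.mpr fun n => ?_⟩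
        -- x ∈ closure (U (n+1) ∩ T), show x ∈ U n
        have hN : IsOpen ((fun g => x⁻¹ * g) ⁻¹' U (n + 1)) :=
          (hUo (n + 1)).preimage (continuous_mul_left _)
        have hxN : x ∈ (fun g => x⁻¹ * g) ⁻¹' U (n + 1) := by
          simp [hU1 (n + 1)]
        obtain ⟨a, haN, haU, haT⟩ :=
          mem_closure_iff.mp (hxcl n) _ hN hxN
        set w : G := x⁻¹ * a with hw
        have hwT : w ∈ T := hTmul _ (hTinv x hxT) _ haT
        have hwU : w ∈ U (n + 1) := haN
        have hwinv : w⁻¹ ∈ U (n + 1) := hUinv n w ⟨hwU, hwT⟩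
        have hxe : x = a * w⁻¹ := by rw [hw]; group
        rw [hxe]
        exact hUmul n a haU w⁻¹ hwinv
    rw [heq]
    have hcl : IsClosed (T ∩ ⋂ n, closure (U (n + 1) ∩ T)) :=
      hT.isClosed.inter (isClosed_iInter fun n => isClosed_closure)
    exact hT.of_isClosed_subset hcl inter_subset_left
  have hHGδ : IsGδ H := hTGδ.inter (IsGδ.iInter_of_isOpen hUo)
  have hHO : H ⊆ O := fun x hx => interior_subset (mem_iInter.mp hx.2 0)
  exact ⟨{ carrier := H
           mul_mem' := fun ha hb => hHmul _ ha _ hb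
           one_mem' := h1H
           inv_mem' := fun ha => hHinv _ ha }, hHc, hHO, hHGδ⟩

end ParaAux

/-- In a Hausdorff paratopological group of almost subcountable type, every
neighborhood of the neutral element contains a compact subgroup that is a
Gδ-set in `G`. -/
theorem exists_compact_subgroup_Gdelta {G : Type*} [Group G]
    [TopologicalSpace G] [ContinuousMul G] [T2Space G]
    (hG : AlmostSubcountableType G) {O : Set G} (hO : O ∈ 𝓝 (1 : G)) :
    ∃ H : Subgroup G, IsCompact (H : Set G) ∧ (H : Set G) ⊆ O ∧
      IsGδ (H : Set G) := by
  obtain ⟨K₀, ⟨x, hx⟩, hK₀c, hK₀Gδ⟩ := hG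
  obtain ⟨f, hfo, hfeq⟩ := hK₀Gδ.eq_iInter_nat
  -- translate so that 1 ∈ K
  set K : Set G := (fun g => x * g) ⁻¹' K₀ with hK
  have hK1 : (1 : G) ∈ K := by simp [hK, hx]
  have hKc : IsCompact K := by
    have himg : K = (fun g => x⁻¹ * g) '' K₀ := by
      ext g
      constructor
      · intro hg; exact ⟨x * g, hg, by group⟩
      · rintro ⟨k, hk, rfl⟩; show x * (x⁻¹ * k) ∈ K₀; rwa [mul_inv_cancel_left]
    rw [himg]
    exact hK₀c.image (continuous_mul_left _)
  set W : ℕ → Set G := fun n => (fun g => x * g) ⁻¹' f n with hWdef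
  have hWo : ∀ n, IsOpen (W n) := fun n => (hfo n).preimage (continuous_mul_left _)
  have hKeq : K = ⋂ n, W n := by
    rw [hK, hfeq]; ext g; simp [hWdef]
  -- the compact monoid T
  set T : Set G := K ∩ {g : G | ∀ k ∈ K, g * k ∈ K} with hTdef
  have h1T : (1 : G) ∈ T := ⟨hK1, fun k hk => by simpa using hk⟩
  have hTmul : ∀ a ∈ T, ∀ b ∈ T, a * b ∈ T := by
    rintro a ⟨haK, haM⟩ b ⟨hbK, hbM⟩
    refine ⟨haM b hbK, fun k hk => ?_⟩
    rw [mul_assoc]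
    exact haM _ (hbM k hk)
  have hTc : IsCompact T := by
    refine hKc.inter_right ?_
    have : {g : G | ∀ k ∈ K, g * k ∈ K} = ⋂ k ∈ K, (fun g => g * k) ⁻¹' K := by
      ext g; simp
    rw [this]
    exact isClosed_biInter fun k _ => hKc.isClosed.preimage (continuous_mul_right _)
  have hTGδ : IsGδ T := by
    have hmemeq : {g : G | ∀ k ∈ K, g * k ∈ K} = ⋂ n, {g : G | ∀ k ∈ K, g * k ∈ W n} := by
      ext g
      simp only [mem_iInter, mem_setOf_eq]
      constructor
      · intro h n k hk
        have := h k hk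
        rw [hKeq] at this
        exact mem_iInter.mp this n
      · intro h k hk
        rw [hKeq]
        exact mem_iInter.mpr fun n => h n k hk
    have hKGδ : IsGδ K := by rw [hKeq]; exact IsGδ.iInter_of_isOpen hWo
    rw [hTdef, hmemeq]
    exact hKGδ.inter (IsGδ.iInter_of_isOpen fun n => isOpen_mulTube hKc (hWo n))
  obtain ⟨-, hTinv⟩ := compact_subsemigroup_subgroup hTc ⟨1, h1T⟩ hTmul
  exact exists_subgroup_in_nhds hTc h1T hTmul hTinv hTGδ hO
end

section
/- Let G be a Hausdorff paratopological group and let H be a non-empty compact subset of G that is closed under multiplication (H·H ⊆ H). Then H is a subgroup of G; that is, H contains the neutral element and is closed under taking inverses. -/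
open Set Topology Pointwise

private lemma aux_one_mem_and_inv {G : Type*} [Group G]
    [TopologicalSpace G] [ContinuousMul G] [T2Space G] {H : Set G}
    (hcomp : IsCompact H) (hmul : H * H ⊆ H) {x : G} (hx : x ∈ H) :
    (1 : G) ∈ H ∧ x⁻¹ ∈ H := by
  set T : ℕ → Set G := fun n => x ^ (n + 1) • H with hT
  have hsub : ∀ n, T (n + 1) ⊆ T n := by
    intro n y hy
    rcases hy with ⟨h, hh, rfl⟩
    refine ⟨x * h, hmul (mul_mem_mul hx hh), ?_⟩
    simp [smul_eq_mul, pow_succ, mul_assoc]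
  have hTsubH : ∀ n, T n ⊆ H := by
    intro n
    induction n with
    | zero =>
      rintro y ⟨h, hh, rfl⟩
      simpa using hmul (mul_mem_mul hx hh)
    | succ k ih => exact (hsub k).trans ih
  have hTcomp : ∀ n, IsCompact (T n) :=
    fun n => hcomp.smul _
  have hTne : ∀ n, (T n).Nonempty := fun n => ⟨x ^ (n + 1) * x, x, hx, rfl⟩
  have hint : (⋂ n, T n).Nonempty :=
    IsCompact.nonempty_iInter_of_sequence_nonempty_isCompact_isClosed T hsub hTne
      (hTcomp 0) (fun n => (hTcomp n).isClosed)
  have hsemi : ∀ a ∈ ⋂ n, T n, ∀ b ∈ ⋂ n, T n, a * b ∈ ⋂ n, T n := by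
    intro a ha b hb
    refine mem_iInter.2 fun n => ?_
    have ha' : a ∈ T n := mem_iInter.1 ha n
    have hb' : b ∈ H := hTsubH 0 (mem_iInter.1 hb 0)
    rcases ha' with ⟨h, hh, rfl⟩
    exact ⟨h * b, hmul (mul_mem_mul hh hb'), by simp [smul_eq_mul, mul_assoc]⟩
  have hintcomp : IsCompact (⋂ n, T n) :=
    (hTcomp 0).of_isClosed_subset (isClosed_iInter fun n => (hTcomp n).isClosed)
      (iInter_subset _ 0)
  obtain ⟨m, hm, hmm⟩ := exists_idempotent_in_compact_subsemigroup
    (fun r => continuous_mul_right r) _ hint hintcomp hsemi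
  have hm1 : m = 1 := by
    have := mul_right_cancel (a := m) (b := m) (c := 1) (by simpa using hmm)
    simpa using this
  subst hm1
  have h1T0 : (1 : G) ∈ T 0 := mem_iInter.1 hm 0
  rcases h1T0 with ⟨h, hh, hhx⟩
  have : x * h = 1 := by simpa [smul_eq_mul] using hhx
  have hxinv : x⁻¹ = h := inv_eq_of_mul_eq_one_right this
  exact ⟨hTsubH 0 (mem_iInter.1 hm 0), hxinv ▸ hh⟩

/-- In a Hausdorff paratopological group, a non-empty compact set closed under
multiplication contains the neutral element and is closed under inverses. -/
theorem compact_subsemigroup_isSubgroup {G : Type*} [Group G]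
    [TopologicalSpace G] [ContinuousMul G] [T2Space G] {H : Set G}
    (hne : H.Nonempty) (hcomp : IsCompact H) (hmul : H * H ⊆ H) :
    (1 : G) ∈ H ∧ ∀ x ∈ H, x⁻¹ ∈ H := by
  obtain ⟨x, hx⟩ := hne
  exact ⟨(aux_one_mem_and_inv hcomp hmul hx).1,
    fun y hy => (aux_one_mem_and_inv hcomp hmul hy).2⟩
end

section
/- Let G be a Hausdorff paratopological group of almost countable type. Then the collection of all sets of the form π_H⁻¹(V), where H ranges over compact subgroups of G that are of countable character in G, π_H : G → G/H is the quotient map onto the left coset space, and V ranges over open subsets of G/H, is a base for the topology of G. Equivalently: for every open set W ⊆ G and every g ∈ W there exist a compact subgroup H of countable character in G and an open set V ⊆ G/H with g ∈ π_H⁻¹(V) ⊆ W. -/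
open Set Topology Pointwise

section AuxSmallSubgroup

variable {G : Type*} [Group G] [TopologicalSpace G] [ContinuousMul G] [T2Space G]

/-- The closure of a multiplicatively closed set is multiplicatively closed. -/
lemma mul_mem_closure_of_mul_closed {S : Set G}
    (h : ∀ x ∈ S, ∀ y ∈ S, x * y ∈ S) :
    ∀ x ∈ closure S, ∀ y ∈ closure S, x * y ∈ closure S := by
  intro x hx y hy
  have hc : Continuous fun p : G × G => p.1 * p.2 := continuous_mul
  have himg := image_closure_subset_closure_image (s := S ×ˢ S) hc
  have hxy : (x, y) ∈ closure (S ×ˢ S) := by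
    rw [closure_prod_eq]; exact ⟨hx, hy⟩
  have hmem : x * y ∈ closure ((fun p : G × G => p.1 * p.2) '' (S ×ˢ S)) :=
    himg ⟨(x, y), hxy, rfl⟩
  refine closure_mono ?_ hmem
  rintro _ ⟨⟨a, b⟩, ⟨ha, hb⟩, rfl⟩
  exact h a ha b hb

/-- Key lemma: in a Hausdorff paratopological group of almost countable type,
every neighborhood of `1` contains a compact subgroup of countable character. -/
lemma exists_small_compact_subgroup (hG : AlmostCountableType G) {O : Set G}
    (hO : IsOpen O) (h1O : (1 : G) ∈ O) :
    ∃ H : Subgroup G, IsCompact (H : Set G) ∧ CountableChar (H : Set G) ∧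
      (H : Set G) ⊆ O := by
  obtain ⟨K₀, ⟨a, ha⟩, hK₀c, U₀, hU₀, hU₀base⟩ := hG
  -- Translate so that `1 ∈ K`.
  set K : Set G := (a * ·) ⁻¹' K₀ with hKdef
  have hKc : IsCompact K := (Homeomorph.mulLeft a).isCompact_preimage.mpr hK₀c
  have h1K : (1 : G) ∈ K := by simpa [hKdef] using ha
  set U : ℕ → Set G := fun n => (a * ·) ⁻¹' (U₀ n) with hUdef
  have hUopen : ∀ n, IsOpen (U n) := fun n =>
    (hU₀ n).1.preimage (continuous_const.mul continuous_id)
  have hKU : ∀ n, K ⊆ U n := fun n x hx => (hU₀ n).2 hx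
  have hUbase : ∀ V : Set G, IsOpen V → K ⊆ V → ∃ n, U n ⊆ V := by
    intro V hV hKV
    obtain ⟨n, hn⟩ := hU₀base ((a⁻¹ * ·) ⁻¹' V)
      (hV.preimage (continuous_const.mul continuous_id))
      (fun x hx => by
        have : a⁻¹ * x ∈ K := by simp [hKdef, hx]
        exact hKV this)
    exact ⟨n, fun x hx => by simpa using hn hx⟩
  have hUK : (⋂ n, U n) ⊆ K := by
    intro x hx
    by_contra hxK
    have hsub : K ⊆ ({x}ᶜ : Set G) := by
      intro y hy
      simp only [Set.mem_compl_iff, Set.mem_singleton_iff]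
      rintro rfl
      exact hxK hy
    obtain ⟨n, hn⟩ := hUbase {x}ᶜ isOpen_compl_singleton hsub
    exact hn (mem_iInter.mp hx n) rfl
  -- The inductive step producing the next open set.
  have step : ∀ (Vn : Set G), IsOpen Vn → (1 : G) ∈ Vn → ∀ m : ℕ,
      ∃ V : Set G, IsOpen V ∧ (1 : G) ∈ V ∧ V ⊆ Vn ∧ V ⊆ U m ∧ V * V ⊆ Vn ∧
        closure V ∩ (K \ Vn) = ∅ := by
    intro Vn hVo hV1 m
    obtain ⟨A, hAo, hA1, hAA⟩ := exists_open_nhds_one_mul_subset (hVo.mem_nhds hV1)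
    have hcomp : IsCompact (K \ Vn) := hKc.diff hVo
    obtain ⟨B, Q, hBo, hQo, h1B, hKQ, hBQ⟩ :=
      SeparatedNhds.of_isCompact_isCompact isCompact_singleton hcomp
        (disjoint_singleton_left.mpr (fun hc => hc.2 hV1))
    refine ⟨A ∩ B ∩ (Vn ∩ U m), (hAo.inter hBo).inter (hVo.inter (hUopen m)),
      ⟨⟨hA1, h1B rfl⟩, hV1, (hKU m) h1K⟩, fun x hx => hx.2.1, fun x hx => hx.2.2,
      ?_, ?_⟩
    · intro z hz
      obtain ⟨x, hx, y, hy, rfl⟩ := hz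
      exact hAA (Set.mul_mem_mul hx.1.1 hy.1.1)
    · have hclB : closure (A ∩ B ∩ (Vn ∩ U m)) ⊆ Qᶜ := by
        refine closure_minimal ?_ hQo.isClosed_compl
        intro x hx hxQ
        exact (Set.disjoint_left.mp hBQ hx.1.2) hxQ
      ext x
      simp only [Set.mem_inter_iff, Set.mem_empty_iff_false, iff_false, not_and]
      intro hxcl hxK
      exact hclB hxcl (hKQ hxK)
  -- Build the sequence of open sets.
  have h1U0 : (1 : G) ∈ O ∩ U 0 := ⟨h1O, hKU 0 h1K⟩
  let D := {p : Set G // IsOpen p ∧ (1 : G) ∈ p}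
  let d0 : D := ⟨O ∩ U 0, hO.inter (hUopen 0), h1U0⟩
  let f : ℕ → D → D := fun n p =>
    ⟨Classical.choose (step p.1 p.2.1 p.2.2 (n + 1)),
     (Classical.choose_spec (step p.1 p.2.1 p.2.2 (n + 1))).1,
     (Classical.choose_spec (step p.1 p.2.1 p.2.2 (n + 1))).2.1⟩
  let Vd : ℕ → D := fun n => Nat.rec d0 f n
  let V : ℕ → Set G := fun n => (Vd n).1
  have hVo : ∀ n, IsOpen (V n) := fun n => (Vd n).2.1
  have hV1 : ∀ n, (1 : G) ∈ V n := fun n => (Vd n).2.2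
  have hspec : ∀ n : ℕ, V (n + 1) ⊆ V n ∧ V (n + 1) ⊆ U (n + 1) ∧
      V (n + 1) * V (n + 1) ⊆ V n ∧ closure (V (n + 1)) ∩ (K \ V n) = ∅ := by
    intro n
    have h := Classical.choose_spec (step (Vd n).1 (Vd n).2.1 (Vd n).2.2 (n + 1))
    exact ⟨h.2.2.1, h.2.2.2.1, h.2.2.2.2.1, h.2.2.2.2.2⟩
  have hVU : ∀ n, V n ⊆ U n := by
    intro n
    cases n with
    | zero => exact fun x hx => hx.2
    | succ n => exact (hspec n).2.1
  have hVO : ∀ n, V n ⊆ O := by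
    intro n
    induction n with
    | zero => exact fun x hx => hx.1
    | succ n ih => exact fun x hx => ih ((hspec n).1 hx)
  have hclosKV : ∀ n, K ∩ closure (V (n + 1)) ⊆ V n := by
    intro n x hx
    by_contra hxV
    have : x ∈ closure (V (n + 1)) ∩ (K \ V n) := ⟨hx.2, hx.1, hxV⟩
    rw [(hspec n).2.2.2] at this
    exact this
  set H₀ : Set G := ⋂ n, V n with hH₀def
  have hH₀K : H₀ ⊆ K := fun x hx => hUK (mem_iInter.mpr fun n => hVU n (mem_iInter.mp hx n))
  have hH₀closed : IsClosed H₀ := by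
    rw [← closure_subset_iff_isClosed]
    intro x hx
    have hxK : x ∈ K := hKc.isClosed.closure_subset_iff.mpr hH₀K hx
    refine mem_iInter.mpr fun n => ?_
    have hxcl : x ∈ closure (V (n + 1)) :=
      closure_mono (fun y hy => mem_iInter.mp hy (n + 1)) hx
    exact hclosKV n ⟨hxK, hxcl⟩
  have hH₀compact : IsCompact H₀ := hKc.of_isClosed_subset hH₀closed hH₀K
  have h1H₀ : (1 : G) ∈ H₀ := mem_iInter.mpr hV1
  have hmulH₀ : ∀ x ∈ H₀, ∀ y ∈ H₀, x * y ∈ H₀ := by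
    intro x hx y hy
    refine mem_iInter.mpr fun n => ?_
    exact (hspec n).2.2.1 (Set.mul_mem_mul (mem_iInter.mp hx (n + 1)) (mem_iInter.mp hy (n + 1)))
  have hpowH₀ : ∀ x ∈ H₀, ∀ n : ℕ, x ^ n ∈ H₀ := by
    intro x hx n
    induction n with
    | zero => simpa using h1H₀
    | succ n ih => rw [pow_succ]; exact hmulH₀ _ ih _ hx
  have hinvH₀ : ∀ x ∈ H₀, x⁻¹ ∈ H₀ := by
    intro x hx
    set S : Set G := Set.range (fun n : ℕ => x ^ (n + 1)) with hSdef
    have hSH : S ⊆ H₀ := by rintro _ ⟨n, rfl⟩; exact hpowH₀ x hx (n + 1)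
    have hSmul : ∀ a ∈ S, ∀ b ∈ S, a * b ∈ S := by
      rintro _ ⟨i, rfl⟩ _ ⟨j, rfl⟩
      exact ⟨i + j + 1, by rw [← pow_add]; ring_nf⟩
    set C : Set G := closure S with hCdef
    have hCH : C ⊆ H₀ := hH₀closed.closure_subset_iff.mpr hSH
    have hCcomp : IsCompact C := hH₀compact.of_isClosed_subset isClosed_closure hCH
    have hCne : C.Nonempty := ⟨x, subset_closure ⟨0, by simp⟩⟩
    obtain ⟨e, heC, he⟩ := exists_idempotent_in_compact_subsemigroup
      (fun r : G => continuous_id.mul continuous_const) C hCne hCcomp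
      (mul_mem_closure_of_mul_closed hSmul)
    have he1 : e = 1 := by
      have : e * e = e * 1 := by rw [he, mul_one]
      exact mul_left_cancel this
    have h1C : (1 : G) ∈ C := he1 ▸ heC
    have himg : (x⁻¹ * ·) '' C = closure ((x⁻¹ * ·) '' S) :=
      (Homeomorph.mulLeft x⁻¹).image_closure S
    have hxinv : x⁻¹ ∈ closure ((x⁻¹ * ·) '' S) := by
      rw [← himg]; exact ⟨1, h1C, mul_one x⁻¹⟩
    have hsub : (x⁻¹ * ·) '' S ⊆ H₀ := by
      rintro _ ⟨_, ⟨n, rfl⟩, rfl⟩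
      show x⁻¹ * x ^ (n + 1) ∈ H₀
      have h : x⁻¹ * x ^ (n + 1) = x ^ n := by
        rw [pow_succ', inv_mul_cancel_left]
      rw [h]
      exact hpowH₀ x hx n
    exact hH₀closed.closure_subset_iff.mpr hsub hxinv
  refine ⟨{ carrier := H₀
            mul_mem' := fun hx hy => hmulH₀ _ hx _ hy
            one_mem' := h1H₀
            inv_mem' := fun hx => hinvH₀ _ hx }, hH₀compact, ?_, ?_⟩
  · -- countable character
    refine ⟨fun k => V k.unpair.1 ∩ U k.unpair.2, fun k =>
      ⟨(hVo _).inter (hUopen _), fun x hx =>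
        ⟨mem_iInter.mp hx _, hKU _ (hH₀K hx)⟩⟩, ?_⟩
    intro Ω hΩ hHΩ
    set F : ℕ → Set G := fun n => (K ∩ closure (V (n + 1))) ∩ Ωᶜ with hFdef
    have hFd : ∀ n, F (n + 1) ⊆ F n := by
      intro n y hy
      exact ⟨⟨hy.1.1, closure_mono (hspec (n + 1)).1 hy.1.2⟩, hy.2⟩
    have hFc : ∀ n, IsClosed (F n) :=
      fun n => ((hKc.isClosed.inter isClosed_closure).inter hΩ.isClosed_compl)
    have hFempty : ∃ n, F n = ∅ := by
      by_contra hne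
      push_neg at hne
      have hnonempty : ∀ n, (F n).Nonempty := hne
      have hinter := IsCompact.nonempty_iInter_of_sequence_nonempty_isCompact_isClosed
        F hFd hnonempty (hKc.of_isClosed_subset (hFc 0) (fun y hy => hy.1.1)) hFc
      obtain ⟨y, hy⟩ := hinter
      have hyH : y ∈ H₀ := by
        refine mem_iInter.mpr fun n => ?_
        have := (mem_iInter.mp hy n)
        exact hclosKV n this.1
      exact (mem_iInter.mp hy 0).2 (hHΩ hyH)
    obtain ⟨n, hFn⟩ := hFempty
    have hKsub : K ⊆ Ω ∪ (closure (V (n + 1)))ᶜ := by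
      intro y hy
      by_contra hyn
      simp only [Set.mem_union, not_or, Set.mem_compl_iff, not_not] at hyn
      have : y ∈ F n := ⟨⟨hy, hyn.2⟩, hyn.1⟩
      rw [hFn] at this
      exact this
    obtain ⟨m, hm⟩ := hUbase _ (hΩ.union isClosed_closure.isOpen_compl) hKsub
    refine ⟨Nat.pair (n + 1) m, ?_⟩
    simp only [Nat.unpair_pair]
    intro y hy
    rcases hm hy.2 with h | h
    · exact h
    · exact absurd (subset_closure hy.1) h
  · exact fun x hx => hVO 0 (mem_iInter.mp hx 0)

end AuxSmallSubgroup

/-- In a Hausdorff paratopological group of almost countable type, the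
preimages under the quotient maps `G → G ⧸ H` of open sets, where `H` ranges
over compact subgroups of countable character in `G`, form a base of the
topology of `G`. -/
theorem base_of_quotient_preimages {G : Type*} [Group G] [TopologicalSpace G]
    [ContinuousMul G] [T2Space G] (hG : AlmostCountableType G)
    {W : Set G} (hW : IsOpen W) {g : G} (hg : g ∈ W) :
    ∃ H : Subgroup G, IsCompact (H : Set G) ∧ CountableChar (H : Set G) ∧
      ∃ V : Set (G ⧸ H), IsOpen V ∧
        g ∈ (QuotientGroup.mk : G → G ⧸ H) ⁻¹' V ∧
        (QuotientGroup.mk : G → G ⧸ H) ⁻¹' V ⊆ W := by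
  have h1O : (1 : G) ∈ (g * ·) ⁻¹' W := by simpa using hg
  obtain ⟨H, hHc, hHchar, hHO⟩ := exists_small_compact_subgroup hG
    (hW.preimage (continuous_const.mul continuous_id)) h1O
  refine ⟨H, hHc, hHchar, ?_⟩
  set T : Set G := {x : G | ∀ h ∈ (H : Set G), x * h ∈ W} with hTdef
  have hTopen : IsOpen T := by
    rw [isOpen_iff_forall_mem_open]
    intro x hx
    have hsub : {x} ×ˢ (H : Set G) ⊆ (fun p : G × G => p.1 * p.2) ⁻¹' W := by
      rintro ⟨p, q⟩ ⟨hp, hq⟩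
      rw [Set.mem_singleton_iff] at hp
      subst hp
      exact hx q hq
    obtain ⟨u, v, huo, hvo, hxu, hHv, huv⟩ :=
      generalized_tube_lemma isCompact_singleton hHc (hW.preimage continuous_mul) hsub
    refine ⟨u, ?_, huo, hxu rfl⟩
    intro y hy h hh
    exact huv (Set.mk_mem_prod hy (hHv hh))
  have hTsat : ∀ x ∈ T, ∀ y : G, (QuotientGroup.mk x : G ⧸ H) = QuotientGroup.mk y → y ∈ T := by
    intro x hx y hxy h hh
    rw [QuotientGroup.eq] at hxy
    have hyh : y * h = x * ((x⁻¹ * y) * h) := by group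
    rw [hyh]
    exact hx _ (H.mul_mem hxy hh)
  have hpre : (QuotientGroup.mk : G → G ⧸ H) ⁻¹' (QuotientGroup.mk '' T) = T := by
    ext y
    constructor
    · rintro ⟨x, hx, hxy⟩
      exact hTsat x hx y hxy
    · intro hy
      exact ⟨y, hy, rfl⟩
  refine ⟨QuotientGroup.mk '' T, ?_, ?_, ?_⟩
  · rw [← (QuotientGroup.isQuotientMap_mk H).isOpen_preimage, hpre]
    exact hTopen
  · refine ⟨g, ?_, rfl⟩
    intro h hh
    exact hHO hh
  · intro x hx
    rw [hpre] at hx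
    simpa using hx 1 H.one_mem
end

section
/- Let G be a paratopological group. If H is a compact subgroup of G and P is a closed subset of G, then the sets HP = {hp : h ∈ H, p ∈ P} and PH = {ph : p ∈ P, h ∈ H} are closed in G. -/
open Set Topology Pointwise

private lemma aux_left {G : Type*} [Group G] [TopologicalSpace G] [ContinuousMul G]
    (H : Subgroup G) (hH : IsCompact (H : Set G)) {P : Set G} (hP : IsClosed P) :
    IsClosed ((H : Set G) * P) := by
  rw [← isOpen_compl_iff, isOpen_iff_mem_nhds]
  intro x hx
  have key : ∀ k ∈ (H : Set G), ∃ U W : Set G, IsOpen U ∧ k ∈ U ∧ W ∈ 𝓝 x ∧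
      ∀ u ∈ U, ∀ w ∈ W, u * w ∉ P := by
    intro k hk
    have hkx : k * x ∈ Pᶜ := fun hmem =>
      hx ⟨k⁻¹, H.inv_mem hk, k * x, hmem, by group⟩
    have hc : (fun p : G × G => p.1 * p.2) ⁻¹' Pᶜ ∈ 𝓝 (k, x) :=
      (continuous_mul (M := G)).continuousAt (hP.isOpen_compl.mem_nhds hkx)
    rw [nhds_prod_eq, Filter.mem_prod_iff] at hc
    obtain ⟨U, hU, W, hW, hUW⟩ := hc
    obtain ⟨U', hU's, hU'o, hkU'⟩ := mem_nhds_iff.mp hU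
    exact ⟨U', W, hU'o, hkU', hW, fun u hu w hw =>
      hUW (Set.mk_mem_prod (hU's hu) hw)⟩
  choose! U W hUo hkU hW hsep using key
  obtain ⟨t, hts, hcov⟩ := hH.elim_nhds_subcover U
    (fun k hk => (hUo k hk).mem_nhds (hkU k hk))
  refine Filter.mem_of_superset (Filter.biInter_finset_mem t |>.mpr
    (fun k hk => hW k (hts k hk))) ?_
  intro g hg hgHP
  obtain ⟨h, hh, p, hp, rfl⟩ := hgHP
  have hhinv : h⁻¹ ∈ (H : Set G) := H.inv_mem hh
  obtain ⟨k, hkmem⟩ := Set.mem_iUnion₂.mp (hcov hhinv)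
  obtain ⟨hkt, hkU'⟩ := hkmem
  have := hsep k (hts k hkt) h⁻¹ hkU' (h * p) (Set.mem_iInter₂.mp hg k hkt)
  exact this (by simpa using hp)

private lemma aux_right {G : Type*} [Group G] [TopologicalSpace G] [ContinuousMul G]
    (H : Subgroup G) (hH : IsCompact (H : Set G)) {P : Set G} (hP : IsClosed P) :
    IsClosed (P * (H : Set G)) := by
  rw [← isOpen_compl_iff, isOpen_iff_mem_nhds]
  intro x hx
  have key : ∀ k ∈ (H : Set G), ∃ U W : Set G, IsOpen U ∧ k ∈ U ∧ W ∈ 𝓝 x ∧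
      ∀ u ∈ U, ∀ w ∈ W, w * u ∉ P := by
    intro k hk
    have hkx : x * k ∈ Pᶜ := fun hmem =>
      hx ⟨x * k, hmem, k⁻¹, H.inv_mem hk, by group⟩
    have hc : (fun p : G × G => p.1 * p.2) ⁻¹' Pᶜ ∈ 𝓝 (x, k) :=
      (continuous_mul (M := G)).continuousAt (hP.isOpen_compl.mem_nhds hkx)
    rw [nhds_prod_eq, Filter.mem_prod_iff] at hc
    obtain ⟨W, hW, U, hU, hUW⟩ := hc
    obtain ⟨U', hU's, hU'o, hkU'⟩ := mem_nhds_iff.mp hU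
    exact ⟨U', W, hU'o, hkU', hW, fun u hu w hw =>
      hUW (Set.mk_mem_prod hw (hU's hu))⟩
  choose! U W hUo hkU hW hsep using key
  obtain ⟨t, hts, hcov⟩ := hH.elim_nhds_subcover U
    (fun k hk => (hUo k hk).mem_nhds (hkU k hk))
  refine Filter.mem_of_superset (Filter.biInter_finset_mem t |>.mpr
    (fun k hk => hW k (hts k hk))) ?_
  intro g hg hgPH
  obtain ⟨p, hp, h, hh, rfl⟩ := hgPH
  have hhinv : h⁻¹ ∈ (H : Set G) := H.inv_mem hh
  obtain ⟨k, hkmem⟩ := Set.mem_iUnion₂.mp (hcov hhinv)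
  obtain ⟨hkt, hkU'⟩ := hkmem
  have := hsep k (hts k hkt) h⁻¹ hkU' (p * h) (Set.mem_iInter₂.mp hg k hkt)
  exact this (by simpa using hp)

/-- In a paratopological group, if `H` is a compact subgroup and `P` is
closed, then `H * P` and `P * H` are closed. -/
theorem compact_subgroup_mul_closed {G : Type*} [Group G] [TopologicalSpace G]
    [ContinuousMul G] (H : Subgroup G) (hH : IsCompact (H : Set G))
    {P : Set G} (hP : IsClosed P) :
    IsClosed ((H : Set G) * P) ∧ IsClosed (P * (H : Set G)) := by
  exact ⟨aux_left H hH hP, aux_right H hH hP⟩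
end

section
/- Let G be a paratopological group. If H is a compact subgroup of G, then the quotient mapping π of G onto the left coset space G/H (with the quotient topology) is a perfect mapping, i.e. π is continuous, closed, and has compact fibers. -/
open Set Topology Pointwise

/-- In a paratopological group, `C * K` is closed when `C` is closed and `K` compact. -/
lemma isClosed_mul_of_isCompact {G : Type*} [Group G] [TopologicalSpace G]
    [ContinuousMul G] {C K : Set G} (hC : IsClosed C) (hK : IsCompact K)
    (hKsub : ∀ k ∈ K, k⁻¹ ∈ K) : IsClosed (C * K) := by
  rw [← isOpen_compl_iff]
  rw [isOpen_iff_mem_nhds]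
  intro x hx
  have hsub : {x} ×ˢ K ⊆ (fun p : G × G => p.1 * p.2) ⁻¹' Cᶜ := by
    rintro ⟨a, b⟩ ⟨rfl, hb⟩
    intro hc
    exact hx ⟨a * b, hc, b⁻¹, hKsub b hb, by group⟩
  obtain ⟨U, V, hU, hV, hxU, hKV, hUV⟩ :=
    generalized_tube_lemma isCompact_singleton hK (hC.isOpen_compl.preimage continuous_mul) hsub
  refine Filter.mem_of_superset (hU.mem_nhds (hxU rfl)) ?_
  rintro u hu ⟨c, hc, k, hk, rfl⟩
  exact hUV (show ((c * k, k⁻¹) : G × G) ∈ U ×ˢ V from ⟨hu, hKV (hKsub k hk)⟩)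
    (by simpa using hc)

/-- In a paratopological group, the quotient map onto the left coset space of
a compact subgroup is perfect. -/
theorem quotient_map_perfect {G : Type*} [Group G] [TopologicalSpace G]
    [ContinuousMul G] (H : Subgroup G) (hH : IsCompact (H : Set G)) :
    PerfectMap (QuotientGroup.mk : G → G ⧸ H) := by
  refine ⟨continuous_quot_mk, ?_, ?_⟩
  · intro C hC
    rw [← (QuotientGroup.isQuotientMap_mk H).isClosed_preimage,
      QuotientGroup.preimage_image_mk_eq_mul]
    exact isClosed_mul_of_isCompact hC hH (fun k hk => H.inv_mem hk)
  · intro y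
    induction y using Quotient.inductionOn with
    | h x =>
      have : (QuotientGroup.mk : G → G ⧸ H) ⁻¹' {Quotient.mk _ x} = {x} * (H : Set G) := by
        rw [← QuotientGroup.preimage_image_mk_eq_mul, Set.image_singleton]
      rw [this, Set.singleton_mul]
      exact hH.image (continuous_mul_left x)
end

section
/- Let G be a Hausdorff paratopological group of almost countable type. Then there exists a compact subgroup H of G that is of countable character in G such that the quotient mapping π of G onto the left coset space G/H is perfect. -/
open Set Topology Pointwise

/-! Let `K` be a nonempty compact set of countable character and `H = {g | K * g ⊆ K}`.
Then `H` is a closed submonoid contained in the compact set `k⁻¹ K` (`k ∈ K`), and a compact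
submonoid of a Hausdorff group with continuous multiplication is a subgroup: the closed
subsemigroup generated by `g` carries an idempotent, necessarily `1`, so `g⁻¹` is a limit of
powers of `g`. If `(U n)` is a decreasing base at `K`, the sets `{g | K * g ⊆ U n}` are open by
the tube lemma and form a base at `H`: a filter along which `x * g` tends to `𝓝ˢ K` for every
`x ∈ K` clusters, and only at points of `H`. The tube lemma also shows that the quotient map
by a compact subgroup is closed. -/

open Filter

namespace CountableChar

variable {X : Type*} [TopologicalSpace X] {K : Set X}

theorem exists_antitone_basis (hK : CountableChar K) :
    ∃ U : ℕ → Set X, (∀ n, IsOpen (U n)) ∧ (𝓝ˢ K).HasAntitoneBasis U := by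
  obtain ⟨V, hV, hVbasis⟩ := hK
  have hbasis : (𝓝ˢ K).HasBasis (fun _ => True) V :=
    (hasBasis_nhdsSet K).to_hasBasis
      (fun W ⟨hWo, hKW⟩ => (hVbasis W hWo hKW).imp fun _ h => ⟨trivial, h⟩)
      fun n _ => ⟨V n, hV n, subset_rfl⟩
  have := hbasis.isCountablyGenerated
  obtain ⟨W, hW, hWbasis⟩ := (hasBasis_nhdsSet K).exists_antitone_subbasis
  exact ⟨W, fun n => (hW n).1, hWbasis⟩

end CountableChar

theorem IsCompact.exists_clusterPt_of_le_nhdsSet {X : Type*} [TopologicalSpace X] {K : Set X}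
    (hK : IsCompact K) {f : Filter X} [hf₀ : f.NeBot] (hf : f ≤ 𝓝ˢ K) :
    ∃ x ∈ K, ClusterPt x f := by
  by_contra! h
  simp only [clusterPt_iff_not_disjoint, not_not] at h
  exact hf₀.ne ((hK.disjoint_nhdsSet_left.2 h).eq_bot_of_ge hf)

theorem IsCompact.mem_of_clusterPt_of_le_nhdsSet {X : Type*} [TopologicalSpace X] [T2Space X]
    {K : Set X} (hK : IsCompact K) {f : Filter X} {x : X} (hx : ClusterPt x f)
    (hf : f ≤ 𝓝ˢ K) : x ∈ K := by
  by_contra h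
  exact clusterPt_iff_not_disjoint.1 hx ((hK.disjoint_nhdsSet_nhds h).symm.mono_right hf)

theorem IsCompact.isOpen_setOf_forall_mem {X Y Z : Type*} [TopologicalSpace X]
    [TopologicalSpace Y] [TopologicalSpace Z] {f : X → Y → Z}
    (hf : Continuous (Function.uncurry f)) {K : Set Y} (hK : IsCompact K) {U : Set Z}
    (hU : IsOpen U) : IsOpen {x | ∀ y ∈ K, f x y ∈ U} :=
  isOpen_iff_eventually.2 fun _ hx => hK.eventually_forall_of_forall_eventually fun y hy =>
    hf.continuousAt.eventually_mem (hU.mem_nhds (hx y hy))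

section CompactSubmonoid

variable {G : Type*} [Group G] [TopologicalSpace G] [ContinuousMul G] [T2Space G]

theorem one_mem_closure_range_pow_succ {g : G}
    (hc : IsCompact (closure (range fun n : ℕ => g ^ (n + 1)))) :
    (1 : G) ∈ closure (range fun n : ℕ => g ^ (n + 1)) := by
  let P : Subsemigroup G :=
    { carrier := range fun n : ℕ => g ^ (n + 1)
      mul_mem' := by
        rintro _ _ ⟨m, rfl⟩ ⟨n, rfl⟩
        exact ⟨m + n + 1, by rw [← pow_add]; ring_nf⟩ }
  obtain ⟨e, he, hee⟩ := exists_idempotent_in_compact_subsemigroup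
    (fun a => continuous_mul_const a) (closure P)
    ⟨g, subset_closure (show g ∈ P from ⟨0, pow_one g⟩)⟩ hc
    fun _ ha _ hb => P.topologicalClosure.mul_mem ha hb
  rwa [mul_eq_left.1 hee] at he

theorem IsCompact.inv_mem_of_submonoid {S : Submonoid G} (hS : IsCompact (S : Set G)) {g : G}
    (hg : g ∈ S) : g⁻¹ ∈ S := by
  have hpow : range (fun n : ℕ => g ^ (n + 1)) ⊆ S := by
    rintro _ ⟨n, rfl⟩
    exact S.pow_mem hg _
  have hshift : MapsTo (· * g⁻¹) (range fun n : ℕ => g ^ (n + 1)) S := by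
    rintro _ ⟨n, rfl⟩
    simpa [pow_succ] using S.pow_mem hg n
  have hc := hS.of_isClosed_subset isClosed_closure (closure_minimal hpow hS.isClosed)
  simpa using hS.isClosed.closure_subset <|
    map_mem_closure (continuous_mul_const g⁻¹) (one_mem_closure_range_pow_succ hc) hshift

end CompactSubmonoid

section RightStabilizer

variable {G : Type*} [Group G] [TopologicalSpace G] [ContinuousMul G]

def rightStabilizer (K : Set G) : Submonoid G where
  carrier := {g | ∀ x ∈ K, x * g ∈ K}
  one_mem' := by simp
  mul_mem' ha hb x hx := mul_assoc x _ _ ▸ hb _ (ha x hx)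

variable [T2Space G] {K : Set G}

theorem isCompact_rightStabilizer (hK : IsCompact K) (hne : K.Nonempty) :
    IsCompact (rightStabilizer K : Set G) := by
  obtain ⟨k, hk⟩ := hne
  have hclosed : IsClosed (rightStabilizer K : Set G) := by
    simp only [rightStabilizer, Submonoid.coe_set_mk, Subsemigroup.coe_set_mk, ofPred_forall]
    exact isClosed_biInter fun x _ => hK.isClosed.preimage (continuous_const_mul x)
  exact ((Homeomorph.mulLeft k).isCompact_preimage.2 hK).of_isClosed_subset hclosed
    fun g hg => hg k hk

theorem exists_clusterPt_mem_rightStabilizer (hK : IsCompact K) (hne : K.Nonempty)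
    {F : Filter G} [F.NeBot] (hF : ∀ x ∈ K, Tendsto (x * ·) F (𝓝ˢ K)) :
    ∃ g ∈ rightStabilizer K, ClusterPt g F := by
  obtain ⟨k, hk⟩ := hne
  obtain ⟨y, -, hy⟩ := hK.exists_clusterPt_of_le_nhdsSet (hF k hk)
  have hky : ClusterPt (k⁻¹ * y) F := by
    simpa [map_map, Function.comp_def] using
      hy.map (continuous_const_mul k⁻¹).continuousAt tendsto_map
  exact ⟨k⁻¹ * y, fun x hx => hK.mem_of_clusterPt_of_le_nhdsSet
    (hky.map (continuous_const_mul x).continuousAt tendsto_map) (hF x hx), hky⟩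

theorem countableChar_rightStabilizer (hK : IsCompact K) (hne : K.Nonempty)
    (hKc : CountableChar K) : CountableChar (rightStabilizer K : Set G) := by
  obtain ⟨U, hUo, hU⟩ := hKc.exists_antitone_basis
  refine ⟨fun n => {g | ∀ x ∈ K, x * g ∈ U n}, fun n => ⟨?_, ?_⟩, fun W hWo hHW => ?_⟩
  · exact hK.isOpen_setOf_forall_mem (f := fun g x => x * g)
      (continuous_snd.mul continuous_fst) (hUo n)
  · exact fun g hg x hx => subset_of_mem_nhdsSet (hU.mem n) (hg x hx)
  by_contra! hW
  choose g hgU hgW using fun n => not_subset.1 (hW n)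
  obtain ⟨g₀, hg₀H, hg₀⟩ := exists_clusterPt_mem_rightStabilizer hK hne (F := map g atTop)
    fun x hx => tendsto_map'_iff.2 (hU.tendsto fun n => hgU n x hx)
  exact hWo.isClosed_compl.mem_of_mapClusterPt hg₀ (Eventually.of_forall hgW) (hHW hg₀H)

end RightStabilizer

theorem perfectMap_quotientGroup_mk {G : Type*} [Group G] [TopologicalSpace G] [ContinuousMul G]
    {H : Subgroup G} (hH : IsCompact (H : Set G)) :
    PerfectMap (QuotientGroup.mk : G → G ⧸ H) := by
  refine ⟨QuotientGroup.continuous_mk, fun F hF => ?_, fun y => ?_⟩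
  · rw [← (QuotientGroup.isQuotientMap_mk H).isClosed_preimage, QuotientGroup.preimage_image_mk,
      ← isOpen_compl_iff, compl_iUnion]
    convert hH.isOpen_setOf_forall_mem (f := (· * ·)) continuous_mul hF.isOpen_compl using 1
    ext; simp
  · obtain ⟨x, rfl⟩ := QuotientGroup.mk_surjective y
    convert (Homeomorph.mulLeft x⁻¹).isCompact_preimage.2 hH using 1
    ext g; simp [QuotientGroup.eq, eq_comm]

/-- A Hausdorff paratopological group of almost countable type admits a
compact subgroup `H` of countable character in `G` such that the quotient map
`G → G ⧸ H` is perfect. -/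
theorem exists_compact_subgroup_perfect_quotient {G : Type*} [Group G]
    [TopologicalSpace G] [ContinuousMul G] [T2Space G]
    (hG : AlmostCountableType G) :
    ∃ H : Subgroup G, IsCompact (H : Set G) ∧ CountableChar (H : Set G) ∧
      PerfectMap (QuotientGroup.mk : G → G ⧸ H) := by
  obtain ⟨K, hne, hK, hKc⟩ := hG
  have hH := isCompact_rightStabilizer hK hne
  let H : Subgroup G := { rightStabilizer K with inv_mem' := hH.inv_mem_of_submonoid }
  exact ⟨H, hH, countableChar_rightStabilizer hK hne hKc, perfectMap_quotientGroup_mk hH⟩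
end

section
/- Let G be a paratopological group. If H is a compact subgroup of G that is of countable character in G, then the left coset space G/H (with the quotient topology) is first-countable. -/
open Set Topology Pointwise

/-- In a paratopological group, if `H` is a compact subgroup of countable
character in `G`, then the left coset space `G ⧸ H` is first-countable. -/
theorem quotient_firstCountable {G : Type*} [Group G] [TopologicalSpace G]
    [ContinuousMul G] (H : Subgroup G) (hH : IsCompact (H : Set G))
    (hchar : CountableChar (H : Set G)) :
    FirstCountableTopology (G ⧸ H) := by
  obtain ⟨U, hU, hbasis⟩ := hchar
  have hopen : IsOpenMap ((↑) : G → G ⧸ H) := by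
    intro s hs
    rw [← isQuotientMap_quotient_mk'.isOpen_preimage]
    show IsOpen (QuotientGroup.mk ⁻¹' (QuotientGroup.mk '' s))
    rw [QuotientGroup.preimage_image_mk]
    exact isOpen_iUnion fun x => hs.preimage (continuous_mul_right _)
  constructor
  intro x
  obtain ⟨g, rfl⟩ := QuotientGroup.mk_surjective x
  have hbas : (𝓝 (QuotientGroup.mk g : G ⧸ H)).HasBasis (fun _ : ℕ => True)
      (fun n => QuotientGroup.mk '' ((g * ·) '' U n)) := by
    constructor
    intro t
    constructor
    · intro ht
      obtain ⟨W, hWt, hW, hxW⟩ := mem_nhds_iff.mp ht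
      have hpre : IsOpen ((g * ·) ⁻¹' (QuotientGroup.mk ⁻¹' W)) :=
        ((hW.preimage continuous_quotient_mk').preimage (continuous_mul_left g))
      have hsub : (H : Set G) ⊆ (g * ·) ⁻¹' (QuotientGroup.mk ⁻¹' W) := by
        intro h hh
        show (QuotientGroup.mk (g * h) : G ⧸ H) ∈ W
        rwa [QuotientGroup.mk_mul_of_mem g hh]
      obtain ⟨n, hn⟩ := hbasis _ hpre hsub
      refine ⟨n, trivial, ?_⟩
      rintro y ⟨z, ⟨u, hu, rfl⟩, rfl⟩
      exact hWt (hn hu)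
    · rintro ⟨n, -, hsub⟩
      refine Filter.mem_of_superset ?_ hsub
      have hmem : (g : G) ∈ (g * ·) '' U n := ⟨1, (hU n).2 H.one_mem, mul_one g⟩
      have : IsOpen ((g * ·) '' U n) := by
        have := (hU n).1.preimage (continuous_mul_left g⁻¹)
        convert this using 1
        ext y
        simp [eq_inv_mul_iff_mul_eq, eq_comm]
      exact (hopen _ this).mem_nhds ⟨g, hmem, rfl⟩
  exact hbas.isCountablyGenerated
end

section
/- A Hausdorff paratopological group G is of almost countable type if and only if G contains a compact subgroup H such that the left coset space G/H (with the quotient topology) is first-countable. -/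
open Set Topology Pointwise

section AuxLemmas

open Filter

variable {G : Type*} [Group G] [TopologicalSpace G] [ContinuousMul G]

/-- A nonempty compact closed subsemigroup of a Hausdorff group with continuous
multiplication is closed under inverses (via the Ellis–Numakura idempotent lemma). -/
private lemma aux_inv_mem [T2Space G] {H : Set G} (hcomp : IsCompact H) (hcl : IsClosed H)
    (hmul : ∀ x ∈ H, ∀ y ∈ H, x * y ∈ H) {a : G} (ha : a ∈ H) : a⁻¹ ∈ H := by
  set Hsg : Subsemigroup G := ⟨H, fun {x y} hx hy => hmul x hx y hy⟩ with hHsg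
  set C : Set G := ((Subsemigroup.closure {a} : Subsemigroup G) : Set G) with hC
  have hCH : C ⊆ H := Subsemigroup.closure_le (S := Hsg).mpr (by
    intro x hx; rcases hx with rfl; exact ha)
  have hclC : closure C ⊆ H := closure_minimal hCH hcl
  have haC : a ∈ C := Subsemigroup.subset_closure rfl
  obtain ⟨m, hm, hmm⟩ := exists_idempotent_in_compact_subsemigroup
    (fun r => continuous_mul_right r) (closure C) ⟨a, subset_closure haC⟩
    (hcomp.of_isClosed_subset isClosed_closure hclC)
    (fun x hx y hy => (Subsemigroup.closure {a}).topologicalClosure.mul_mem hx hy)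
  have hm1 : m = 1 := by
    have := hmm
    nth_rewrite 3 [show m = m * 1 by rw [mul_one]] at this
    exact mul_left_cancel this
  have h1 : (1 : G) ∈ closure C := hm1 ▸ hm
  have himg : a⁻¹ ∈ (a⁻¹ * ·) '' closure C := ⟨1, h1, mul_one a⁻¹⟩
  have hsub : (a⁻¹ * ·) '' closure C ⊆ closure ((a⁻¹ * ·) '' C) :=
    image_closure_subset_closure_image (continuous_mul_left a⁻¹)
  have himgH : (a⁻¹ * ·) '' C ⊆ H := by
    rintro _ ⟨c, hc, rfl⟩
    induction hc using Subsemigroup.closure_induction with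
    | mem x hx =>
        have hxa : x = a := hx
        subst hxa
        show x⁻¹ * x ∈ H
        rw [inv_mul_cancel]
        exact hclC h1
    | mul x y hx hy px py =>
        show a⁻¹ * (x * y) ∈ H
        rw [← mul_assoc]
        exact hmul _ px _ (hCH hy)
  exact closure_minimal himgH hcl (hsub himg)

/-- The set of `x` such that `K * x ⊆ U` is open, for `K` compact and `U` open. -/
private lemma aux_isOpen_S {K U : Set G} (hK : IsCompact K) (hUo : IsOpen U) :
    IsOpen {x : G | ∀ k ∈ K, k * x ∈ U} := by
  rw [isOpen_iff_mem_nhds]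
  intro x hx
  have hKx : IsCompact ((· * x) '' K) := hK.image (continuous_mul_right x)
  have hsub : (· * x) '' K ⊆ U := by rintro _ ⟨k, hk, rfl⟩; exact hx k hk
  obtain ⟨V, hV, hVU⟩ := compact_open_separated_mul_right hKx hUo hsub
  have hmem : x ∈ (x * ·) '' interior V :=
    ⟨1, mem_interior_iff_mem_nhds.2 hV, mul_one x⟩
  have hopen : IsOpen ((x * ·) '' interior V) := isOpenMap_mul_left x _ isOpen_interior
  refine Filter.mem_of_superset (hopen.mem_nhds hmem) ?_
  rintro _ ⟨v, hv, rfl⟩ k hk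
  have : (k * x) * v ∈ ((· * x) '' K) * V :=
    mul_mem_mul ⟨k, hk, rfl⟩ (interior_subset hv)
  rw [mul_assoc] at this
  exact hVU this

/-- Key lemma: if `U n` is a decreasing neighbourhood base of the compact set `K`, then the
open sets `S n = {x | K * x ⊆ U n}` form a neighbourhood base of `H = {x | K * x ⊆ K}`. -/
private lemma aux_base [T2Space G] {K : Set G} (hK : IsCompact K) (hne : K.Nonempty)
    {U : ℕ → Set G} (hanti : Antitone U)
    (hbase : ∀ V : Set G, IsOpen V → K ⊆ V → ∃ n, U n ⊆ V)
    {V : Set G} (hVo : IsOpen V) (hHV : {x | ∀ k ∈ K, k * x ∈ K} ⊆ V) :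
    ∃ n, {x : G | ∀ k ∈ K, k * x ∈ U n} ⊆ V := by
  by_contra hcon
  push_neg at hcon
  simp only [Set.not_subset] at hcon
  choose x hx hxV using hcon
  simp only [mem_setOf_eq] at hx
  set 𝒰 : Ultrafilter ℕ := Ultrafilter.of atTop with h𝒰
  have hatTop : ∀ {s : Set ℕ}, s ∈ (atTop : Filter ℕ) → s ∈ 𝒰 :=
    fun hs => Ultrafilter.of_le atTop hs
  have tail : ∀ k ∈ K, ↑(𝒰.map (fun n => k * x n)) ≤ 𝓝ˢ K := by
    intro k hk T hT
    obtain ⟨W, hWo, hKW, hWT⟩ := mem_nhdsSet_iff_exists.mp hT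
    obtain ⟨m, hm⟩ := hbase W hWo hKW
    refine hatTop (mem_atTop_sets.2 ⟨m, fun n hn => ?_⟩)
    exact hWT (hm (hanti hn (hx n k hk)))
  obtain ⟨k₀, hk₀⟩ := hne
  have hlimex : ∃ a ∈ K, ↑(𝒰.map (fun n => k₀ * x n)) ≤ 𝓝 a := by
    by_contra hC
    push_neg at hC
    have hdisj : ∀ b ∈ K, Disjoint (𝓝 b) ↑(𝒰.map (fun n => k₀ * x n)) := by
      intro b hb
      have := hC b hb
      rw [← Ultrafilter.clusterPt_iff, clusterPt_iff_not_disjoint, not_not] at this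
      exact this
    have hdisj2 : Disjoint (𝓝ˢ K) ↑(𝒰.map (fun n => k₀ * x n)) :=
      hK.disjoint_nhdsSet_left.mpr hdisj
    have hbot : (↑(𝒰.map (fun n => k₀ * x n)) : Filter G) ≤ ⊥ :=
      le_trans (le_inf (tail k₀ hk₀) le_rfl) hdisj2.le_bot
    exact (Ultrafilter.neBot _).ne (le_bot_iff.mp hbot)
  obtain ⟨a, haK, hlim⟩ := hlimex
  have hmapx : ∀ g : G, (↑(𝒰.map (fun n => g * x n)) : Filter G) =
      Filter.map (fun z => (g * k₀⁻¹) * z) ↑(𝒰.map (fun n => k₀ * x n)) := by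
    intro g
    simp only [Ultrafilter.coe_map, Filter.map_map]
    congr 1
    funext n
    simp [mul_assoc]
  have hxlim : ∀ g : G, (↑(𝒰.map (fun n => g * x n)) : Filter G) ≤ 𝓝 ((g * k₀⁻¹) * a) := by
    intro g
    rw [hmapx g]
    exact (Filter.map_mono hlim).trans (continuous_mul_left (g * k₀⁻¹)).continuousAt
  set xinf : G := k₀⁻¹ * a with hxinf
  have hxinfH : xinf ∈ {x | ∀ k ∈ K, k * x ∈ K} := by
    intro k hk
    by_contra hkK
    have hdisj : Disjoint (𝓝ˢ K) (𝓝 (k * xinf)) :=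
      hK.disjoint_nhdsSet_left.mpr fun b hb =>
        disjoint_nhds_nhds.mpr (by rintro rfl; exact hkK hb)
    have h1 : (↑(𝒰.map (fun n => k * x n)) : Filter G) ≤ 𝓝 (k * xinf) := by
      have := hxlim k
      rwa [show (k * k₀⁻¹) * a = k * xinf by rw [hxinf, mul_assoc]] at this
    have hbot : (↑(𝒰.map (fun n => k * x n)) : Filter G) ≤ ⊥ :=
      le_trans (le_inf (tail k hk) h1) hdisj.le_bot
    exact (Ultrafilter.neBot _).ne (le_bot_iff.mp hbot)
  have hVnhds : V ∈ 𝓝 xinf := hVo.mem_nhds (hHV hxinfH)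
  have hxlim1 : (↑(𝒰.map x) : Filter G) ≤ 𝓝 xinf := by
    have := hxlim 1
    simp only [one_mul] at this
    exact this
  have hmem : {n | x n ∈ V} ∈ 𝒰 := hxlim1 hVnhds
  obtain ⟨n, hn⟩ := Ultrafilter.nonempty_of_mem hmem
  exact hxV n hn

end AuxLemmas

/-- A Hausdorff paratopological group is of almost countable type iff it
contains a compact subgroup `H` such that `G ⧸ H` is first-countable. -/
theorem almostCountableType_iff_exists_compact_subgroup {G : Type*} [Group G]
    [TopologicalSpace G] [ContinuousMul G] [T2Space G] :
    AlmostCountableType G ↔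
      ∃ H : Subgroup G, IsCompact (H : Set G) ∧
        FirstCountableTopology (G ⧸ H) := by
  constructor
  · rintro ⟨K, hne, hKc, U0, hU0, hbase0⟩
    -- a decreasing open neighbourhood base of `K`
    set U : ℕ → Set G := fun n => ⋂ m ∈ Finset.range (n + 1), U0 m with hUdef
    have hUo : ∀ n, IsOpen (U n) := fun n => isOpen_biInter_finset fun m _ => (hU0 m).1
    have hKU : ∀ n, K ⊆ U n := fun n =>
      subset_iInter₂ fun m _ => (hU0 m).2
    have hanti : Antitone U := by
      intro m n hmn y hy
      simp only [hUdef, mem_iInter, Finset.mem_range] at hy ⊢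
      intro i hi
      exact hy i (lt_of_lt_of_le hi (by omega))
    have hbase : ∀ V : Set G, IsOpen V → K ⊆ V → ∃ n, U n ⊆ V := by
      intro V hVo hKV
      obtain ⟨n, hn⟩ := hbase0 V hVo hKV
      refine ⟨n, fun y hy => hn ?_⟩
      simp only [hUdef, mem_iInter, Finset.mem_range] at hy
      exact hy n (by omega)
    -- the compact subgroup
    set Hset : Set G := {x | ∀ k ∈ K, k * x ∈ K} with hHdef
    have hHcl : IsClosed Hset := by
      have : Hset = ⋂ k ∈ K, (fun x => k * x) ⁻¹' K := by
        ext y; simp [hHdef]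
      rw [this]
      exact isClosed_biInter fun k _ => hKc.isClosed.preimage (continuous_mul_left k)
    obtain ⟨k₀, hk₀⟩ := hne
    have hHsub : Hset ⊆ (fun y => k₀⁻¹ * y) '' K := fun y hy =>
      ⟨k₀ * y, hy k₀ hk₀, by simp⟩
    have hHcomp : IsCompact Hset :=
      (hKc.image (continuous_mul_left k₀⁻¹)).of_isClosed_subset hHcl hHsub
    have hone : (1 : G) ∈ Hset := fun k hk => by simpa using hk
    have hmulmem : ∀ x ∈ Hset, ∀ y ∈ Hset, x * y ∈ Hset := by
      intro x hx y hy k hk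
      rw [← mul_assoc]
      exact hy _ (hx k hk)
    set H : Subgroup G :=
      { carrier := Hset
        one_mem' := hone
        mul_mem' := fun hx hy => hmulmem _ hx _ hy
        inv_mem' := fun hx => aux_inv_mem hHcomp hHcl hmulmem hx } with hHgrp
    refine ⟨H, hHcomp, ?_⟩
    constructor
    intro q
    obtain ⟨g, rfl⟩ := QuotientGroup.mk_surjective q
    set S : ℕ → Set G := fun n => {x | ∀ k ∈ K, k * x ∈ U n} with hSdef
    have hSo : ∀ n, IsOpen (S n) := fun n => aux_isOpen_S hKc (hUo n)
    have hS1 : ∀ n, (1 : G) ∈ S n := fun n k hk => by simpa using hKU n hk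
    have hbasis : (𝓝 (QuotientGroup.mk g : G ⧸ H)).HasBasis (fun _ : ℕ => True)
        (fun n => QuotientGroup.mk '' ((g * ·) '' S n)) := by
      constructor
      intro T
      constructor
      · intro hT
        have hA : (QuotientGroup.mk : G → G ⧸ H) ⁻¹' T ∈ 𝓝 g :=
          QuotientGroup.continuous_mk.continuousAt hT
        obtain ⟨Ω, hΩsub, hΩo, hgΩ⟩ := mem_nhds_iff.mp hA
        have hBo : IsOpen (Ω * (H : Set G)) := hΩo.mul_right
        set Vset : Set G := (g⁻¹ * ·) '' (Ω * (H : Set G)) with hVdef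
        have hVo : IsOpen Vset := isOpenMap_mul_left g⁻¹ _ hBo
        have hHV : Hset ⊆ Vset := fun h hh =>
          ⟨g * h, mul_mem_mul hgΩ hh, by simp⟩
        obtain ⟨n, hn⟩ := aux_base hKc ⟨k₀, hk₀⟩ hanti hbase hVo hHV
        refine ⟨n, trivial, ?_⟩
        rintro _ ⟨_, ⟨sx, hsx, rfl⟩, rfl⟩
        obtain ⟨b, hb, hbx⟩ := hn hsx
        obtain ⟨w, hw, h, hh, rfl⟩ := hb
        have hgsx : g * sx = w * h := by rw [← hbx]; simp
        show (QuotientGroup.mk (g * sx) : G ⧸ H) ∈ T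
        rw [hgsx, QuotientGroup.mk_mul_of_mem w hh]
        exact hΩsub hw
      · rintro ⟨n, -, hsub⟩
        refine Filter.mem_of_superset ?_ hsub
        have hopen : IsOpen ((QuotientGroup.mk : G → G ⧸ H) '' ((g * ·) '' S n)) :=
          QuotientGroup.isOpenMap_coe _ (isOpenMap_mul_left g _ (hSo n))
        exact hopen.mem_nhds ⟨g * 1, ⟨1, hS1 n, rfl⟩, by rw [mul_one]⟩
    exact hbasis.isCountablyGenerated
  · rintro ⟨H, hHc, hfc⟩
    refine ⟨(H : Set G), ⟨1, H.one_mem⟩, hHc, ?_⟩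
    haveI := hfc
    obtain ⟨s, hs⟩ := (𝓝 (QuotientGroup.mk (1 : G) : G ⧸ H)).exists_antitone_basis
    have hHH : (H : Set G) * (H : Set G) = H := by
      ext y
      constructor
      · rintro ⟨a, ha, b, hb, rfl⟩
        exact H.mul_mem ha hb
      · intro hy
        exact ⟨y, hy, 1, H.one_mem, mul_one y⟩
    refine ⟨fun n => QuotientGroup.mk ⁻¹' interior (s n), fun n =>
      ⟨isOpen_interior.preimage QuotientGroup.continuous_mk, ?_⟩, ?_⟩
    · intro h hh
      have hmk : (QuotientGroup.mk h : G ⧸ H) = QuotientGroup.mk 1 := by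
        rw [QuotientGroup.eq]
        simpa using H.inv_mem hh
      rw [mem_preimage, hmk]
      exact mem_interior_iff_mem_nhds.2 (hs.mem n)
    · intro V hVo hHV
      obtain ⟨V', hV'1, hV'H⟩ := compact_open_separated_mul_left hHc hVo hHV
      have hWH : interior V' * (H : Set G) ⊆ V :=
        (mul_subset_mul_right interior_subset).trans hV'H
      have hWHo : IsOpen (interior V' * (H : Set G)) := isOpen_interior.mul_right
      have hmem1 : (1 : G) ∈ interior V' * (H : Set G) := by
        have := mul_mem_mul (mem_interior_iff_mem_nhds.2 hV'1) H.one_mem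
        rwa [mul_one] at this
      have hnhds : QuotientGroup.mk '' (interior V' * (H : Set G)) ∈
          𝓝 (QuotientGroup.mk (1 : G) : G ⧸ H) :=
        (QuotientGroup.isOpenMap_coe _ hWHo).mem_nhds ⟨1, hmem1, rfl⟩
      obtain ⟨n, -, hn⟩ := hs.toHasBasis.mem_iff.mp hnhds
      refine ⟨n, ?_⟩
      calc QuotientGroup.mk ⁻¹' interior (s n)
          ⊆ QuotientGroup.mk ⁻¹' (s n) := preimage_mono interior_subset
        _ ⊆ QuotientGroup.mk ⁻¹' (QuotientGroup.mk '' (interior V' * (H : Set G))) :=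
            preimage_mono hn
        _ = interior V' * (H : Set G) * (H : Set G) :=
            QuotientGroup.preimage_image_mk_eq_mul H _
        _ = interior V' * ((H : Set G) * (H : Set G)) := by rw [mul_assoc]
        _ = interior V' * (H : Set G) := by rw [hHH]
        _ ⊆ V := hWH
end

section
/- Let X be a Hausdorff locally compact topological space such that the set X \ I(X) of non-isolated points of X is compact. Then X is homeomorphic to the topological sum of a compact space and a discrete space; equivalently, there exists a compact open subset C of X containing X \ I(X) such that every point of X \ C is isolated in X. -/
open Set Topology

/-- A Hausdorff locally compact space whose set of non-isolated points is
compact is homeomorphic to a topological sum of a compact space and a discrete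
space; equivalently, there is a compact open set `C` containing all
non-isolated points such that every point outside `C` is isolated. -/
theorem sum_of_compact_and_discrete {X : Type*} [TopologicalSpace X] [T2Space X]
    [LocallyCompactSpace X]
    (h : IsCompact {x : X | ¬ IsOpen ({x} : Set X)}) :
    ∃ C : Set X, IsCompact C ∧ IsOpen C ∧
      {x : X | ¬ IsOpen ({x} : Set X)} ⊆ C ∧
      ∀ x ∉ C, IsOpen ({x} : Set X) := by
  obtain ⟨L, hLc, hKL⟩ := exists_compact_superset h
  have hLopen : IsOpen L := by
    rw [isOpen_iff_mem_nhds]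
    intro x hx
    by_cases hxi : x ∈ interior L
    · exact mem_interior_iff_mem_nhds.mp hxi
    · have hiso : IsOpen ({x} : Set X) := by
        by_contra hcon
        exact hxi (hKL hcon)
      exact mem_nhds_iff.mpr ⟨{x}, by simpa using hx, hiso, rfl⟩
  refine ⟨L, hLc, hLopen, fun x hx => interior_subset (hKL hx), fun x hx => ?_⟩
  by_contra hcon
  exact hx (interior_subset (hKL hcon))
end
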